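/- arXiv:2107.03775 — 6 statements merged into one kernel-verified Lean document; each statement's English description precedes it below -/
import Mathlib

section
/- For every real number z and every natural number l ≥ 1, the function R_l(z) = ∑_{m=0}^∞ (iz)^m / (m+l)! satisfies |R_l(z)| ≤ 1/l!. -/
/-!
Integrating the exponential series term by term against `(1 - t)^n / n!` and evaluating the
Beta integrals `∫₀¹ t^m (1 - t)^n dt = m! n! / (m + n + 1)!` gives
`R (n + 1) z = ∫₀¹ exp (i z t) (1 - t)^n / n! dt`. Since `|exp (i z t)| = 1`, this is bounded by
`∫₀¹ (1 - t)^n / n! dt = 1 / (n + 1)!`. For `l = 0` the series is `exp (i z)` itself.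
-/

open Complex Nat MeasureTheory

noncomputable def R (l : ℕ) (z : ℝ) : ℂ :=
  ∑' m : ℕ, (Complex.I * z) ^ m / ((m + l).factorial : ℂ)

theorem integral_ofReal_pow_mul_one_sub_pow (m n : ℕ) :
    ∫ t in (0:ℝ)..1, (t : ℂ) ^ m * (1 - t) ^ n = m ! * n ! / (m + n + 1)! := by
  have hre (k : ℕ) : 0 < ((k : ℂ) + 1).re := by
    simp only [add_re, natCast_re, one_re]
    positivity
  have h := Gamma_mul_Gamma_eq_betaIntegral (hre m) (hre n)
  rw [show (m : ℂ) + 1 + (n + 1) = ((m + n + 1 : ℕ) : ℂ) + 1 by push_cast; ring,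
    Gamma_nat_eq_factorial, Gamma_nat_eq_factorial, Gamma_nat_eq_factorial, betaIntegral] at h
  simp only [add_sub_cancel_right, cpow_natCast] at h
  rw [h, mul_div_cancel_left₀ _ (by exact_mod_cast factorial_ne_zero _)]

theorem integral_one_sub_pow (n : ℕ) : ∫ t in (0:ℝ)..1, (1 - t) ^ n = 1 / (n + 1) := by
  simp [intervalIntegral.integral_comp_sub_left (fun s : ℝ => s ^ n)]

theorem norm_one_sub_pow_div_factorial {t : ℝ} (ht : t ≤ 1) (n : ℕ) :
    ‖(1 - (t : ℂ)) ^ n / (n ! : ℂ)‖ = (1 - t) ^ n / n ! := by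
  rw [← ofReal_one, ← ofReal_sub, ← ofReal_pow, ← ofReal_natCast, ← ofReal_div, norm_real,
    Real.norm_of_nonneg (by have := sub_nonneg.2 ht; positivity)]

theorem one_sub_pow_div_factorial_le_one {t : ℝ} (ht : t ∈ Set.Icc 0 1) (n : ℕ) :
    (1 - t) ^ n / n ! ≤ 1 :=
  div_le_one_of_le₀ ((pow_le_one₀ (by linarith [ht.2]) (by linarith [ht.1])).trans
    (one_le_cast.2 (factorial_pos n))) (by positivity)

theorem integral_mul_pow_div_factorial_mul (c : ℂ) (m n : ℕ) :
    ∫ t in (0:ℝ)..1, (c * t) ^ m / m ! * ((1 - t) ^ n / n !) = c ^ m / (m + n + 1)! := by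
  have hm : (m ! : ℂ) ≠ 0 := by exact_mod_cast factorial_ne_zero m
  have hn : (n ! : ℂ) ≠ 0 := by exact_mod_cast factorial_ne_zero n
  have hmn : ((m + n + 1)! : ℂ) ≠ 0 := by exact_mod_cast factorial_ne_zero _
  have hsplit : (fun t : ℝ => (c * t) ^ m / m ! * ((1 - t) ^ n / n !)) =
      fun t : ℝ => c ^ m / (m ! * n !) * ((t : ℂ) ^ m * (1 - t) ^ n) := by
    funext t; ring
  rw [hsplit, intervalIntegral.integral_const_mul, integral_ofReal_pow_mul_one_sub_pow]
  field_simp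

theorem norm_mul_pow_div_factorial_mul_le (c : ℂ) {t : ℝ} (ht : t ∈ Set.Icc 0 1) (m n : ℕ) :
    ‖(c * t) ^ m / m ! * ((1 - t) ^ n / n !)‖ ≤ ‖c‖ ^ m / m ! := by
  have ht0 := ht.1
  rw [norm_mul, norm_one_sub_pow_div_factorial ht.2, norm_div, norm_pow, norm_mul,
    norm_real, Real.norm_of_nonneg ht0, norm_natCast, mul_pow]
  calc ‖c‖ ^ m * t ^ m / m ! * ((1 - t) ^ n / n !) ≤ ‖c‖ ^ m * t ^ m / m ! :=
        mul_le_of_le_one_right (by positivity) (one_sub_pow_div_factorial_le_one ht n)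
    _ ≤ ‖c‖ ^ m / m ! := by
        gcongr
        exact mul_le_of_le_one_right (by positivity) (pow_le_one₀ ht0 ht.2)

theorem hasSum_pow_div_factorial_add_succ (c : ℂ) (n : ℕ) :
    HasSum (fun m => c ^ m / (m + n + 1)!)
      (∫ t in (0:ℝ)..1, exp (c * t) * ((1 - t) ^ n / n !)) := by
  simp_rw [← integral_mul_pow_div_factorial_mul c]
  refine intervalIntegral.hasSum_integral_of_dominated_convergence (fun m _ => ‖c‖ ^ m / m !)
    (fun m => (by fun_prop : Continuous _).aestronglyMeasurable)
    (fun m => ae_of_all _ fun t ht => ?_)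
    (ae_of_all _ fun _ _ => Real.summable_pow_div_factorial ‖c‖) intervalIntegrable_const
    (ae_of_all _ fun t _ => ?_)
  · rw [Set.uIoc_of_le zero_le_one] at ht
    exact norm_mul_pow_div_factorial_mul_le c (Set.Ioc_subset_Icc_self ht) m n
  · rw [exp_eq_exp_ℂ]
    exact (NormedSpace.expSeries_div_hasSum_exp (c * t)).mul_right _

theorem norm_integral_exp_I_mul_le (z : ℝ) (n : ℕ) :
    ‖∫ t in (0:ℝ)..1, exp (I * z * t) * ((1 - t) ^ n / n !)‖ ≤ 1 / ((n + 1)! : ℝ) := by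
  calc _ ≤ ∫ t in (0:ℝ)..1, (1 - t) ^ n / (n ! : ℝ) := by
        refine intervalIntegral.norm_integral_le_of_norm_le zero_le_one
          (ae_of_all _ fun t ht => ?_) ((by fun_prop : Continuous _).intervalIntegrable _ _)
        rw [norm_mul, norm_one_sub_pow_div_factorial ht.2, mul_assoc, ← ofReal_mul,
          norm_exp_I_mul_ofReal, one_mul]
    _ = 1 / ((n + 1)! : ℝ) := by
      rw [intervalIntegral.integral_div, integral_one_sub_pow, factorial_succ]
      push_cast
      field_simp

theorem R_zero (z : ℝ) : R 0 z = exp (I * z) := by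
  rw [R, exp_eq_exp_ℂ, NormedSpace.exp_eq_tsum_div]
  rfl

theorem R_succ (n : ℕ) (z : ℝ) :
    R (n + 1) z = ∫ t in (0:ℝ)..1, exp (I * z * t) * ((1 - t) ^ n / n !) :=
  (hasSum_pow_div_factorial_add_succ (I * z) n).tsum_eq

theorem abs_R_le_general (z : ℝ) (l : ℕ) :
    ‖R l z‖ ≤ 1 / (l.factorial : ℝ) := by
  cases l with
  | zero => simp [R_zero]
  | succ n => exact R_succ n z ▸ norm_integral_exp_I_mul_le z n

/-- For every real `z` and natural `l ≥ 1`, `|R_l(z)| ≤ 1/l!`. -/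
theorem abs_R_le (z : ℝ) (l : ℕ) (hl : 1 ≤ l) :
    ‖R l z‖ ≤ 1 / (l.factorial : ℝ) :=
  abs_R_le_general z l
end

section
/- Let φ be the characteristic function of a real random variable, and suppose there exist functions a, b : ℝ → ℂ with t ↦ t²·a(t) and t ↦ t²·b(t) continuous, constants A > 0 and B ≥ 0 with ‖a‖_∞ ≤ A and ‖b‖_∞ ≤ B, such that φ'(t) + t·φ(t) = t²·(a(t)·φ(t) + b(t)) for all t ∈ ℝ. Then for all t ≥ 0 with t ≤ 1/(2A), |φ(t) − exp(−t²/2)| ≤ (A/3)·t³·exp(−t²/4) + 2Bt. -/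
open MeasureTheory

/-!
Multiplying by the Gaussian integrating factor, `f(t) = φ(t) e^{t²/2} - 1` vanishes at `0` and
satisfies `f' = t² (a φ + b) e^{t²/2}`, so `‖f'‖ ≤ A t² (‖f‖ + 1) + B t² e^{t²/2}`. On
`0 ≤ t ≤ 1/(2A)` the function `C(t) = (A/3) t³ e^{t²/4} + 2 B t e^{t²/2}` is a supersolution of
this differential inequality, so a comparison argument gives `‖f‖ ≤ C`; multiplying back by
`e^{-t²/2}` yields the bound.
-/

open Set in
theorem image_norm_le_of_norm_deriv_right_le_deriv_boundary_add_mul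
    {E : Type*} [NormedAddCommGroup E] [NormedSpace ℝ E] {f f' : ℝ → E} {g g' : ℝ → ℝ}
    {a b K : ℝ} (hf : ContinuousOn f (Icc a b))
    (hf' : ∀ x ∈ Ico a b, HasDerivWithinAt f (f' x) (Ici x) x)
    (ha : ‖f a‖ ≤ g a) (hg : ∀ x, HasDerivAt g (g' x) x)
    (bound : ∀ x ∈ Ico a b, g x ≤ ‖f x‖ → ‖f' x‖ ≤ g' x + K * (‖f x‖ - g x)) :
    ∀ ⦃x⦄, x ∈ Icc a b → ‖f x‖ ≤ g x := by
  intro x hx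
  refine le_of_forall_pos_le_add fun ε hε => ?_
  -- The strict fencing theorem applies to `g + ε e^{(K+1)(y - x)}`, which equals `g x + ε` at `x`.
  have hbarrier : ∀ y, HasDerivAt (fun y => g y + ε * Real.exp ((K + 1) * (y - x)))
      (g' y + ε * (Real.exp ((K + 1) * (y - x)) * (K + 1))) y := fun y =>
    (hg y).add ((((hasDerivAt_id y).sub_const x).const_mul (K + 1)).exp.const_mul ε
      |>.congr_deriv (by simp))
  have key := image_norm_le_of_norm_deriv_right_lt_deriv_boundary hf hf'
    (by have := Real.exp_pos ((K + 1) * (a - x)); nlinarith) hbarrier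
    (fun y hy hfy => by
      have hpos : 0 < ε * Real.exp ((K + 1) * (y - x)) := by positivity
      have := bound y hy (by linarith)
      rw [hfy] at this
      nlinarith) hx
  simpa using key

theorem HasDerivAt.mul_exp_sq_half {φ : ℝ → ℂ} {φ' : ℂ} {t : ℝ} (h : HasDerivAt φ φ' t) :
    HasDerivAt (fun s => φ s * Real.exp (s ^ 2 / 2))
      ((φ' + t * φ t) * Real.exp (t ^ 2 / 2)) t := by
  have hexp : HasDerivAt (fun s : ℝ => (Real.exp (s ^ 2 / 2) : ℂ))
      ((Real.exp (t ^ 2 / 2) * t : ℝ) : ℂ) t :=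
    (((hasDerivAt_pow 2 t).div_const 2).exp.congr_deriv (by ring)).ofReal_comp
  refine (h.mul hexp).congr_deriv ?_
  push_cast
  ring

theorem norm_mul_exp_sq_half_le {φ' φ a b : ℂ} {t A B : ℝ}
    (hode : φ' + t * φ = (t : ℂ) ^ 2 * (a * φ + b)) (ha : ‖a‖ ≤ A) (hb : ‖b‖ ≤ B) :
    ‖(φ' + t * φ) * Real.exp (t ^ 2 / 2)‖ ≤
      A * t ^ 2 * (‖φ * Real.exp (t ^ 2 / 2) - 1‖ + 1) + B * t ^ 2 * Real.exp (t ^ 2 / 2) := by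
  have hφe : ‖φ‖ * Real.exp (t ^ 2 / 2) ≤ ‖φ * Real.exp (t ^ 2 / 2) - 1‖ + 1 := by
    simpa only [norm_mul, Complex.norm_real, Real.norm_of_nonneg (Real.exp_pos _).le, norm_one]
      using norm_le_norm_sub_add (φ * Real.exp (t ^ 2 / 2)) 1
  set e := Real.exp (t ^ 2 / 2)
  have hab : ‖a * φ + b‖ ≤ A * ‖φ‖ + B := by
    calc ‖a * φ + b‖ ≤ ‖a‖ * ‖φ‖ + ‖b‖ := (norm_add_le _ _).trans (by rw [norm_mul])
      _ ≤ A * ‖φ‖ + B := by gcongr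
  calc ‖(φ' + t * φ) * e‖ = t ^ 2 * ‖a * φ + b‖ * e := by
        rw [hode, norm_mul, norm_mul, norm_pow, Complex.norm_real, Complex.norm_real,
          Real.norm_eq_abs, sq_abs, Real.norm_of_nonneg (Real.exp_pos _).le]
    _ ≤ t ^ 2 * (A * ‖φ‖ + B) * e := by gcongr
    _ = A * t ^ 2 * (‖φ‖ * e) + B * t ^ 2 * e := by ring
    _ ≤ A * t ^ 2 * (‖φ * e - 1‖ + 1) + B * t ^ 2 * e := by
        have : 0 ≤ A := (norm_nonneg a).trans ha
        gcongr

noncomputable def tikhomirovBarrier (A B t : ℝ) : ℝ :=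
  A / 3 * t ^ 3 * Real.exp (t ^ 2 / 4) + 2 * B * t * Real.exp (t ^ 2 / 2)

noncomputable def tikhomirovBarrierDeriv (A B t : ℝ) : ℝ :=
  (A * t ^ 2 + A / 6 * t ^ 4) * Real.exp (t ^ 2 / 4) +
    (2 * B + 2 * B * t ^ 2) * Real.exp (t ^ 2 / 2)

theorem hasDerivAt_tikhomirovBarrier (A B t : ℝ) :
    HasDerivAt (tikhomirovBarrier A B) (tikhomirovBarrierDeriv A B t) t := by
  have hexp (c : ℝ) : HasDerivAt (fun s => Real.exp (s ^ 2 / c))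
      (Real.exp (t ^ 2 / c) * (2 * t / c)) t :=
    ((hasDerivAt_pow 2 t).div_const c).exp.congr_deriv (by push_cast; ring)
  have hcube := ((hasDerivAt_pow 3 t).const_mul (A / 3)).mul (hexp 4)
  have hlin := ((hasDerivAt_id t).const_mul (2 * B)).mul (hexp 2)
  refine (hcube.add hlin).congr_deriv ?_
  simp only [tikhomirovBarrierDeriv, id]
  push_cast
  ring

theorem tikhomirovBarrier_supersolution {A B t : ℝ} (hA : 0 ≤ A) (hB : 0 ≤ B) (ht : 0 ≤ t)
    (hAt : A * t ≤ 1 / 2) :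
    A * t ^ 2 * (tikhomirovBarrier A B t + 1) + B * t ^ 2 * Real.exp (t ^ 2 / 2) ≤
      tikhomirovBarrierDeriv A B t := by
  have hcube : A * t ^ 2 * (A / 3 * t ^ 3) ≤ A / 6 * t ^ 4 := by
    nlinarith [mul_nonneg (mul_nonneg hA (pow_nonneg ht 4)) (sub_nonneg.2 hAt)]
  have hlin : A * t ^ 2 * (2 * B * t) + B * t ^ 2 ≤ 2 * B * t ^ 2 := by
    nlinarith [mul_nonneg (mul_nonneg hB (sq_nonneg t)) (sub_nonneg.2 hAt)]
  have hexp : A * t ^ 2 ≤ A * t ^ 2 * Real.exp (t ^ 2 / 4) :=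
    le_mul_of_one_le_right (by positivity) (Real.one_le_exp (by positivity))
  have h4 := Real.exp_pos (t ^ 2 / 4)
  have h2 := Real.exp_pos (t ^ 2 / 2)
  simp only [tikhomirovBarrier, tikhomirovBarrierDeriv]
  nlinarith [mul_le_mul_of_nonneg_right hcube h4.le, mul_le_mul_of_nonneg_right hlin h2.le,
    mul_pos (by positivity : (0:ℝ) < 2 * B + 1) h2]

theorem norm_mul_exp_sq_half_le_tikhomirovBarrierDeriv {φ' φ a b : ℂ} {t A B K : ℝ}
    (hode : φ' + t * φ = (t : ℂ) ^ 2 * (a * φ + b)) (ha : ‖a‖ ≤ A) (hb : ‖b‖ ≤ B) (hB : 0 ≤ B)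
    (ht : 0 ≤ t) (hAt : A * t ≤ 1 / 2) (hK : A * t ^ 2 ≤ K)
    (hC : tikhomirovBarrier A B t ≤ ‖φ * Real.exp (t ^ 2 / 2) - 1‖) :
    ‖(φ' + t * φ) * Real.exp (t ^ 2 / 2)‖ ≤ tikhomirovBarrierDeriv A B t +
      K * (‖φ * Real.exp (t ^ 2 / 2) - 1‖ - tikhomirovBarrier A B t) := by
  nlinarith [norm_mul_exp_sq_half_le hode ha hb,
    tikhomirovBarrier_supersolution ((norm_nonneg a).trans ha) hB ht hAt,
    mul_le_mul_of_nonneg_right hK (sub_nonneg.2 hC)]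

theorem norm_sub_exp_neg_sq_half (z : ℂ) (t : ℝ) :
    ‖z - Real.exp (-(t ^ 2) / 2)‖ = ‖z * Real.exp (t ^ 2 / 2) - 1‖ * Real.exp (-(t ^ 2) / 2) := by
  have hexp : (Real.exp (t ^ 2 / 2) : ℂ) * Real.exp (-(t ^ 2) / 2) = 1 := by
    rw [← Complex.ofReal_mul, ← Real.exp_add]; ring_nf; simp
  have hfactor : z - Real.exp (-(t ^ 2) / 2) =
      (z * Real.exp (t ^ 2 / 2) - 1) * (Real.exp (-(t ^ 2) / 2) : ℂ) := by
    linear_combination -z * hexp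
  rw [hfactor, norm_mul, Complex.norm_real, Real.norm_of_nonneg (Real.exp_pos _).le]

theorem tikhomirovBarrier_mul_exp_neg_sq_half (A B t : ℝ) :
    tikhomirovBarrier A B t * Real.exp (-(t ^ 2) / 2) =
      A / 3 * t ^ 3 * Real.exp (-(t ^ 2) / 4) + 2 * B * t := by
  have h4 : Real.exp (t ^ 2 / 4) * Real.exp (-(t ^ 2) / 2) = Real.exp (-(t ^ 2) / 4) := by
    rw [← Real.exp_add]; ring_nf
  have h2 : Real.exp (t ^ 2 / 2) * Real.exp (-(t ^ 2) / 2) = 1 := by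
    rw [← Real.exp_add, ← Real.exp_zero]; ring_nf
  simp only [tikhomirovBarrier]
  linear_combination (A / 3 * t ^ 3) * h4 + (2 * B * t) * h2

theorem tikhomirov_ode_bound_general
    (μ : Measure ℝ) [IsProbabilityMeasure μ]
    (φ φ' a b : ℝ → ℂ) (A B : ℝ) (hA : 0 < A) (hB : 0 ≤ B)
    (hφ : ∀ t : ℝ, φ t = ∫ x, Complex.exp (Complex.I * t * x) ∂μ)
    (hderiv : ∀ t : ℝ, HasDerivAt φ (φ' t) t)
    (hode : ∀ t : ℝ, φ' t + t * φ t = (t : ℂ) ^ 2 * (a t * φ t + b t))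
    (ha : ∀ t : ℝ, ‖a t‖ ≤ A)
    (hb : ∀ t : ℝ, ‖b t‖ ≤ B) :
    ∀ t : ℝ, 0 ≤ t → t ≤ 1 / (2 * A) →
      ‖φ t - Real.exp (-(t ^ 2) / 2)‖ ≤
        A / 3 * t ^ 3 * Real.exp (-(t ^ 2) / 4) + 2 * B * t := by
  intro t ht htA
  set T := 1 / (2 * A)
  set f : ℝ → ℂ := fun s => φ s * Real.exp (s ^ 2 / 2) - 1
  have hf (s : ℝ) : HasDerivAt f ((φ' s + s * φ s) * Real.exp (s ^ 2 / 2)) s :=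
    (hderiv s).mul_exp_sq_half.sub_const 1
  have hf0 : f 0 = 0 := by simp [f, hφ 0]
  have hbound (s : ℝ) (hs : s ∈ Set.Ico 0 T) (hCs : tikhomirovBarrier A B s ≤ ‖f s‖) :=
    norm_mul_exp_sq_half_le_tikhomirovBarrierDeriv (K := A * T ^ 2) (hode s) (ha s) (hb s) hB hs.1
      (by have := (le_div_iff₀' (by positivity)).1 hs.2.le; linarith)
      (mul_le_mul_of_nonneg_left (pow_le_pow_left₀ hs.1 hs.2.le 2) hA.le) hCs
  have hfC : ‖f t‖ ≤ tikhomirovBarrier A B t :=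
    image_norm_le_of_norm_deriv_right_le_deriv_boundary_add_mul
      (fun s _ => (hf s).continuousAt.continuousWithinAt) (fun s _ => (hf s).hasDerivWithinAt)
      (by simp [hf0, tikhomirovBarrier]) (hasDerivAt_tikhomirovBarrier A B) hbound ⟨ht, htA⟩
  calc ‖φ t - Real.exp (-(t ^ 2) / 2)‖ = ‖f t‖ * Real.exp (-(t ^ 2) / 2) :=
        norm_sub_exp_neg_sq_half (φ t) t
    _ ≤ tikhomirovBarrier A B t * Real.exp (-(t ^ 2) / 2) := by gcongr
    _ = A / 3 * t ^ 3 * Real.exp (-(t ^ 2) / 4) + 2 * B * t :=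
        tikhomirovBarrier_mul_exp_neg_sq_half A B t

/-- Tikhomirov ODE lemma: if the characteristic function `φ` of a real random
variable (law `μ`) satisfies `φ'(t) + t·φ(t) = t²·(a(t)·φ(t) + b(t))` with
`‖a‖_∞ ≤ A`, `‖b‖_∞ ≤ B`, and `t ↦ t²a(t)`, `t ↦ t²b(t)` continuous, then for
`0 ≤ t ≤ 1/(2A)` we have `|φ(t) − e^{−t²/2}| ≤ (A/3)t³e^{−t²/4} + 2Bt`. -/
theorem tikhomirov_ode_bound
    (μ : Measure ℝ) [IsProbabilityMeasure μ]
    (φ φ' a b : ℝ → ℂ) (A B : ℝ) (hA : 0 < A) (hB : 0 ≤ B)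
    (hφ : ∀ t : ℝ, φ t = ∫ x, Complex.exp (Complex.I * t * x) ∂μ)
    (hderiv : ∀ t : ℝ, HasDerivAt φ (φ' t) t)
    (hconta : Continuous fun t : ℝ => (t : ℂ) ^ 2 * a t)
    (hcontb : Continuous fun t : ℝ => (t : ℂ) ^ 2 * b t)
    (hode : ∀ t : ℝ, φ' t + t * φ t = (t : ℂ) ^ 2 * (a t * φ t + b t))
    (ha : ∀ t : ℝ, ‖a t‖ ≤ A)
    (hb : ∀ t : ℝ, ‖b t‖ ≤ B) :
    ∀ t : ℝ, 0 ≤ t → t ≤ 1 / (2 * A) →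
      ‖φ t - Real.exp (-(t ^ 2) / 2)‖ ≤
        A / 3 * t ^ 3 * Real.exp (-(t ^ 2) / 4) + 2 * B * t :=
  tikhomirov_ode_bound_general μ φ φ' a b A B hA hB hφ hderiv hode ha hb
end

section
/- Let W be a BKR-decomposable random variable. Then for all t ∈ ℝ, E[(iW + t)·e^{itW}] = t²·E[H_t·e^{itW}], where H_t = i∑_{j∈J} X_j Z_j² R_2(−tZ_j) − i∑_{j∈J}∑_{k∈N_j} (X_j Z_{jk} − E[X_j Z_{jk}])(Z_j + V_{jk}) R_1(−t(Z_j + V_{jk})). -/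
/-
Writing `e(s) = exp(i t s)`, the identity `(iz)^l R_l(z) = e^{iz} - ∑_{m<l} (iz)^m / m!` together
with `W = W_j + Z_j = W_{jk} + (Z_j + V_{jk})` turns `t² H_t e(W)` pointwise into
`(iW + t) e(W) - i ∑_j X_j e(W_j) + t ∑_{j, k ∈ N_j} (X_j Z_{jk} - E[X_j Z_{jk}]) e(W_{jk})`,
once one knows `∑_{j, k ∈ N_j} E[X_j Z_{jk}] = E[W²] = 1` (as `E[X_j W_j] = 0`). The two
correction sums have mean zero, since each centred factor is independent of its exponential.
-/

open MeasureTheory ProbabilityTheory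

/-- The process `H_t` associated with a BKR-decomposition:
`H_t = i∑_j X_j Z_j² R₂(−tZ_j) − i∑_j∑_{k∈N_j}(X_jZ_{jk} − E[X_jZ_{jk}])(Z_j+V_{jk})R₁(−t(Z_j+V_{jk}))`. -/
noncomputable def bkrH {Ω J : Type*} [MeasurableSpace Ω] [Fintype J]
    (μ : Measure Ω) (N : J → Finset J)
    (X Z : J → Ω → ℝ) (Zjk Vjk : J → J → Ω → ℝ) (t : ℝ) (ω : Ω) : ℂ :=
  Complex.I * ∑ j, ((X j ω * (Z j ω) ^ 2 : ℝ) : ℂ) * R 2 (-(t * Z j ω))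
    - Complex.I * ∑ j, ∑ k ∈ N j,
        ((X j ω * Zjk j k ω - ∫ ω', X j ω' * Zjk j k ω' ∂μ : ℝ) : ℂ)
          * ((Z j ω + Vjk j k ω : ℝ) : ℂ) * R 1 (-(t * (Z j ω + Vjk j k ω)))

open scoped Nat

lemma pow_mul_R_eq_exp_sub_sum (l : ℕ) (z : ℝ) :
    (Complex.I * z) ^ l * R l z
      = Complex.exp (Complex.I * z) - ∑ i ∈ Finset.range l, (Complex.I * z) ^ i / (i ! : ℂ) := by
  have hshift : (Complex.I * z) ^ l * R l z
      = ∑' m : ℕ, (Complex.I * z) ^ (m + l) / ((m + l)! : ℂ) := by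
    rw [R, ← tsum_mul_left]
    congr 1 with m
    rw [pow_add]
    ring
  rw [hshift, Complex.exp_eq_exp_ℂ, NormedSpace.exp_eq_tsum_div]
  linear_combination (NormedSpace.expSeries_div_summable (Complex.I * z)).sum_add_tsum_nat_add l

lemma mul_R_one (z : ℝ) : Complex.I * z * R 1 z = Complex.exp (Complex.I * z) - 1 := by
  simpa using pow_mul_R_eq_exp_sub_sum 1 z

lemma sq_mul_R_two (z : ℝ) :
    (Complex.I * z) ^ 2 * R 2 z = Complex.exp (Complex.I * z) - 1 - Complex.I * z := by
  simpa [Finset.sum_range_succ, sub_sub] using pow_mul_R_eq_exp_sub_sum 2 z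

lemma sq_mul_R_two_mul_exp {t z s u : ℝ} (h : s = u + z) :
    (t : ℂ) ^ 2 * ((z : ℂ) ^ 2 * R 2 (-(t * z))) * Complex.exp (Complex.I * t * s)
      = (1 - Complex.I * t * z) * Complex.exp (Complex.I * t * s)
        - Complex.exp (Complex.I * t * u) := by
  have hR := sq_mul_R_two (-(t * z))
  have hexp : Complex.exp (Complex.I * ((-(t * z) : ℝ) : ℂ)) * Complex.exp (Complex.I * t * s)
      = Complex.exp (Complex.I * t * u) := by
    rw [← Complex.exp_add, h]
    congr 1
    push_cast
    ring
  push_cast at hR hexp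
  linear_combination (-Complex.exp (Complex.I * t * s)) * hR - hexp
    + (t ^ 2 * z ^ 2 * R 2 (-(t * z)) * Complex.exp (Complex.I * t * s)) * Complex.I_sq

lemma sq_mul_R_one_mul_exp {t y s u : ℝ} (h : s = u + y) :
    (t : ℂ) ^ 2 * (Complex.I * (y * R 1 (-(t * y)))) * Complex.exp (Complex.I * t * s)
      = t * Complex.exp (Complex.I * t * s) - t * Complex.exp (Complex.I * t * u) := by
  have hR := mul_R_one (-(t * y))
  have hexp : Complex.exp (Complex.I * ((-(t * y) : ℝ) : ℂ)) * Complex.exp (Complex.I * t * s)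
      = Complex.exp (Complex.I * t * u) := by
    rw [← Complex.exp_add, h]
    congr 1
    push_cast
    ring
  push_cast at hR hexp
  linear_combination (-t * Complex.exp (Complex.I * t * s)) * hR - t * hexp

section Integration

variable {Ω : Type*} [MeasurableSpace Ω] {μ : Measure Ω}

lemma MeasureTheory.Integrable.mul_exp_I_mul {f : Ω → ℂ} {g : Ω → ℝ} (hf : Integrable f μ)
    (hg : AEStronglyMeasurable g μ) (t : ℝ) :
    Integrable (fun ω => f ω * Complex.exp (Complex.I * t * g ω)) μ := by
  refine hf.mul_bdd (c := 1) (by fun_prop) (ae_of_all _ fun ω => ?_)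
  rw [mul_assoc, ← Complex.ofReal_mul, Complex.norm_exp_I_mul_ofReal]

lemma ProbabilityTheory.IndepFun.integral_ofReal_mul_exp_eq_zero {f Y : Ω → ℝ}
    (hind : IndepFun f Y μ) (hf : AEMeasurable f μ) (hY : AEMeasurable Y μ)
    (hf0 : ∫ ω, f ω ∂μ = 0) (t : ℝ) :
    ∫ ω, (f ω : ℂ) * Complex.exp (Complex.I * t * Y ω) ∂μ = 0 := by
  rw [hind.integral_fun_comp_mul_comp (f := ((↑) : ℝ → ℂ))
    (g := fun y : ℝ => Complex.exp (Complex.I * t * y)) hf hY (by fun_prop) (by fun_prop),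
    integral_complex_ofReal, hf0, Complex.ofReal_zero, zero_mul]

end Integration

section Decomposition

variable {Ω J : Type*} [MeasurableSpace Ω] [Fintype J] {μ : Measure Ω} {N : J → Finset J}
  {W : Ω → ℝ} {X Wj Z : J → Ω → ℝ} {Zjk Wjk Vjk : J → J → Ω → ℝ}

lemma sum_sum_integral_mul_eq_one
    (hW2 : MemLp W 2 μ) (hX2 : ∀ j, MemLp (X j) 2 μ) (hWj2 : ∀ j, MemLp (Wj j) 2 μ)
    (hZjk2 : ∀ j k, MemLp (Zjk j k) 2 μ)
    (hW : ∀ ω, W ω = ∑ j, X j ω)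
    (hXmean : ∀ j, ∫ ω, X j ω ∂μ = 0)
    (hWnorm : ∫ ω, (W ω) ^ 2 ∂μ = 1)
    (hdec1 : ∀ j ω, W ω = Wj j ω + Z j ω)
    (hZdef : ∀ j ω, Z j ω = ∑ k ∈ N j, Zjk j k ω)
    (hindep1 : ∀ j, IndepFun (Wj j) (X j) μ) :
    ∑ j, ∑ k ∈ N j, ∫ ω, X j ω * Zjk j k ω ∂μ = 1 := by
  have hmul : ∀ {f g : Ω → ℝ}, MemLp f 2 μ → MemLp g 2 μ →
      Integrable (fun ω => f ω * g ω) μ := fun hf hg => hf.integrable_mul hg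
  have hXWj : ∀ j, ∫ ω, X j ω * Wj j ω ∂μ = 0 := fun j => by
    rw [(hindep1 j).symm.integral_fun_mul_eq_mul_integral (hX2 j).1 (hWj2 j).1, hXmean j,
      zero_mul]
  calc ∑ j, ∑ k ∈ N j, ∫ ω, X j ω * Zjk j k ω ∂μ
      = ∑ j, ∫ ω, (X j ω * W ω - X j ω * Wj j ω) ∂μ := by
        refine Finset.sum_congr rfl fun j _ => ?_
        rw [← integral_finsetSum _ fun k _ => hmul (hX2 j) (hZjk2 j k)]
        congr with ω
        rw [← Finset.mul_sum, ← hZdef, hdec1 j ω]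
        ring
    _ = ∑ j, ∫ ω, X j ω * W ω ∂μ := by
        refine Finset.sum_congr rfl fun j _ => ?_
        rw [integral_sub (hmul (hX2 j) hW2) (hmul (hX2 j) (hWj2 j)),
          hXWj j, sub_zero]
    _ = ∫ ω, (W ω) ^ 2 ∂μ := by
        rw [← integral_finsetSum _ fun j _ => hmul (hX2 j) hW2]
        congr with ω
        rw [← Finset.sum_mul, ← hW, sq]
    _ = 1 := hWnorm

lemma sq_mul_bkrH_mul_exp
    (hW : ∀ ω, W ω = ∑ j, X j ω)
    (hdec1 : ∀ j ω, W ω = Wj j ω + Z j ω)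
    (hZdef : ∀ j ω, Z j ω = ∑ k ∈ N j, Zjk j k ω)
    (hdec2 : ∀ j, ∀ k ∈ N j, ∀ ω, Wj j ω = Wjk j k ω + Vjk j k ω)
    (hcov : ∑ j, ∑ k ∈ N j, ∫ ω, X j ω * Zjk j k ω ∂μ = 1) (t : ℝ) (ω : Ω) :
    (t : ℂ) ^ 2 * (bkrH μ N X Z Zjk Vjk t ω * Complex.exp (Complex.I * t * W ω))
      = (Complex.I * W ω + t) * Complex.exp (Complex.I * t * W ω)
        - Complex.I * ∑ j, (X j ω : ℂ) * Complex.exp (Complex.I * t * Wj j ω)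
        + t * ∑ j, ∑ k ∈ N j, ((X j ω * Zjk j k ω - ∫ ω', X j ω' * Zjk j k ω' ∂μ : ℝ) : ℂ)
            * Complex.exp (Complex.I * t * Wjk j k ω) := by
  set e := Complex.exp (Complex.I * t * W ω)
  have hA : ∀ j, (t : ℂ) ^ 2
      * (Complex.I * (((X j ω * Z j ω ^ 2 : ℝ) : ℂ) * R 2 (-(t * Z j ω))) * e)
      = Complex.I * e * X j ω + t * e * (X j ω * Z j ω)
        - Complex.I * (X j ω * Complex.exp (Complex.I * t * Wj j ω)) := fun j => by
    have := sq_mul_R_two_mul_exp (t := t) (hdec1 j ω)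
    push_cast
    linear_combination Complex.I * X j ω * this - t * X j ω * Z j ω * e * Complex.I_sq
  have hB : ∀ (a : ℝ) (j : J), ∀ k ∈ N j, (t : ℂ) ^ 2 * (Complex.I * ((a : ℂ)
        * ((Z j ω + Vjk j k ω : ℝ) : ℂ) * R 1 (-(t * (Z j ω + Vjk j k ω)))) * e)
      = t * e * a - t * (a * Complex.exp (Complex.I * t * Wjk j k ω)) := fun a j k hk => by
    have := sq_mul_R_one_mul_exp (t := t) (y := Z j ω + Vjk j k ω) (s := W ω) (u := Wjk j k ω)
      (by rw [hdec1 j ω, hdec2 j k hk ω]; ring)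
    linear_combination (a : ℂ) * this
  have hc : ∑ j, ∑ k ∈ N j, ((X j ω * Zjk j k ω - ∫ ω', X j ω' * Zjk j k ω' ∂μ : ℝ) : ℂ)
      = ∑ j, (X j ω : ℂ) * Z j ω - 1 := by
    have : ∑ j, ∑ k ∈ N j, (X j ω * Zjk j k ω - ∫ ω', X j ω' * Zjk j k ω' ∂μ)
        = ∑ j, X j ω * Z j ω - 1 := by
      simp only [Finset.sum_sub_distrib, ← Finset.mul_sum, ← hZdef, hcov]
    exact_mod_cast this
  have hWc : (W ω : ℂ) = ∑ j, (X j ω : ℂ) := by exact_mod_cast hW ω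
  simp only [bkrH, mul_sub, sub_mul, Finset.mul_sum, Finset.sum_mul]
  rw [Finset.sum_congr rfl fun j _ => hA j,
    Finset.sum_congr rfl fun j _ => Finset.sum_congr rfl fun k hk => hB _ j k hk]
  simp only [Finset.sum_sub_distrib, Finset.sum_add_distrib, ← Finset.mul_sum]
  linear_combination -Complex.I * e * hWc - t * e * hc

lemma integral_sum_ofReal_mul_exp_eq_zero [IsFiniteMeasure μ] (hX2 : ∀ j, MemLp (X j) 2 μ)
    (hWj2 : ∀ j, MemLp (Wj j) 2 μ) (hXmean : ∀ j, ∫ ω, X j ω ∂μ = 0)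
    (hindep1 : ∀ j, IndepFun (Wj j) (X j) μ) (t : ℝ) :
    ∫ ω, ∑ j, (X j ω : ℂ) * Complex.exp (Complex.I * t * Wj j ω) ∂μ = 0 := by
  have hint : ∀ j, Integrable (fun ω => (X j ω : ℂ) * Complex.exp (Complex.I * t * Wj j ω)) μ :=
    fun j => ((hX2 j).integrable one_le_two).ofReal.mul_exp_I_mul (hWj2 j).1 t
  rw [integral_finsetSum _ fun j _ => hint j]
  exact Finset.sum_eq_zero fun j _ =>
    (hindep1 j).symm.integral_ofReal_mul_exp_eq_zero (hX2 j).1.aemeasurable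
      (hWj2 j).1.aemeasurable (hXmean j) t

lemma integral_sum_sum_centred_mul_exp_eq_zero [IsProbabilityMeasure μ]
    (hX2 : ∀ j, MemLp (X j) 2 μ) (hZjk2 : ∀ j k, MemLp (Zjk j k) 2 μ)
    (hWjk2 : ∀ j k, MemLp (Wjk j k) 2 μ)
    (hindep2 : ∀ j, ∀ k ∈ N j, IndepFun (Wjk j k) (fun ω => (X j ω, Zjk j k ω)) μ) (t : ℝ) :
    ∫ ω, ∑ j, ∑ k ∈ N j, ((X j ω * Zjk j k ω - ∫ ω', X j ω' * Zjk j k ω' ∂μ : ℝ) : ℂ)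
      * Complex.exp (Complex.I * t * Wjk j k ω) ∂μ = 0 := by
  have hXZ : ∀ j k, Integrable (fun ω => X j ω * Zjk j k ω) μ :=
    fun j k => (hX2 j).integrable_mul (hZjk2 j k)
  have hint : ∀ j k, Integrable (fun ω =>
      ((X j ω * Zjk j k ω - ∫ ω', X j ω' * Zjk j k ω' ∂μ : ℝ) : ℂ)
        * Complex.exp (Complex.I * t * Wjk j k ω)) μ :=
    fun j k => ((hXZ j k).sub' (integrable_const _)).ofReal.mul_exp_I_mul (hWjk2 j k).1 t
  rw [integral_finsetSum _ fun j _ => integrable_finsetSum _ fun k _ => hint j k]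
  refine Finset.sum_eq_zero fun j _ => ?_
  rw [integral_finsetSum _ fun k _ => hint j k]
  refine Finset.sum_eq_zero fun k hk => IndepFun.integral_ofReal_mul_exp_eq_zero ?_
    ((hXZ j k).1.aemeasurable.sub_const _) (hWjk2 j k).1.aemeasurable ?_ t
  · exact ((hindep2 j k hk).comp measurable_id
      ((measurable_fst.mul measurable_snd).sub_const _)).symm
  · rw [integral_sub (hXZ j k) (integrable_const _)]
    simp

end Decomposition

theorem bkr_stein_identity_general
    {Ω J : Type*} [MeasurableSpace Ω] [Fintype J]
    (μ : Measure Ω) [IsProbabilityMeasure μ]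
    (N : J → Finset J) (W : Ω → ℝ) (X Wj Z : J → Ω → ℝ)
    (Zjk Wjk Vjk : J → J → Ω → ℝ)
    (hW2 : MemLp W 2 μ) (hX2 : ∀ j, MemLp (X j) 2 μ)
    (hWj2 : ∀ j, MemLp (Wj j) 2 μ)
    (hZjk2 : ∀ j k, MemLp (Zjk j k) 2 μ)
    (hWjk2 : ∀ j k, MemLp (Wjk j k) 2 μ)
    (hW : ∀ ω, W ω = ∑ j, X j ω)
    (hXmean : ∀ j, ∫ ω, X j ω ∂μ = 0)
    (hWnorm : ∫ ω, (W ω) ^ 2 ∂μ = 1)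
    (hdec1 : ∀ j ω, W ω = Wj j ω + Z j ω)
    (hZdef : ∀ j ω, Z j ω = ∑ k ∈ N j, Zjk j k ω)
    (hdec2 : ∀ j, ∀ k ∈ N j, ∀ ω, Wj j ω = Wjk j k ω + Vjk j k ω)
    (hindep1 : ∀ j, IndepFun (Wj j) (X j) μ)
    (hindep2 : ∀ j, ∀ k ∈ N j, IndepFun (Wjk j k) (fun ω => (X j ω, Zjk j k ω)) μ) :
    ∀ t : ℝ,
      ∫ ω, (Complex.I * W ω + t) * Complex.exp (Complex.I * t * W ω) ∂μ =
        (t : ℂ) ^ 2 * ∫ ω, bkrH μ N X Z Zjk Vjk t ω * Complex.exp (Complex.I * t * W ω) ∂μ := by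
  intro t
  have hcov := sum_sum_integral_mul_eq_one hW2 hX2 hWj2 hZjk2 hW hXmean hWnorm hdec1 hZdef hindep1
  have hLHS : Integrable (fun ω => (Complex.I * W ω + t) * Complex.exp (Complex.I * t * W ω)) μ :=
    (((hW2.integrable one_le_two).ofReal.const_mul _).add (integrable_const _)).mul_exp_I_mul
      hW2.1 t
  have hXe : Integrable (fun ω => Complex.I
      * ∑ j, (X j ω : ℂ) * Complex.exp (Complex.I * t * Wj j ω)) μ :=
    (integrable_finsetSum _ fun j _ =>
      ((hX2 j).integrable one_le_two).ofReal.mul_exp_I_mul (hWj2 j).1 t).const_mul _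
  have hce : Integrable (fun ω => (t : ℂ) * ∑ j, ∑ k ∈ N j,
      ((X j ω * Zjk j k ω - ∫ ω', X j ω' * Zjk j k ω' ∂μ : ℝ) : ℂ)
        * Complex.exp (Complex.I * t * Wjk j k ω)) μ :=
    (integrable_finsetSum _ fun j _ => integrable_finsetSum _ fun k _ =>
      (((hX2 j).integrable_mul (hZjk2 j k)).sub (integrable_const _)).ofReal.mul_exp_I_mul
        (hWjk2 j k).1 t).const_mul _
  rw [← integral_const_mul]
  simp_rw [sq_mul_bkrH_mul_exp hW hdec1 hZdef hdec2 hcov]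
  rw [integral_add (hLHS.sub' hXe) hce, integral_sub hLHS hXe, integral_const_mul,
    integral_const_mul, integral_sum_ofReal_mul_exp_eq_zero hX2 hWj2 hXmean hindep1,
    integral_sum_sum_centred_mul_exp_eq_zero hX2 hZjk2 hWjk2 hindep2]
  simp

/-- For a BKR-decomposable `W`, `E[(iW + t)e^{itW}] = t²·E[H_t e^{itW}]` for all `t`. -/
theorem bkr_stein_identity
    {Ω J : Type*} [MeasurableSpace Ω] [Fintype J]
    (μ : Measure Ω) [IsProbabilityMeasure μ]
    (N : J → Finset J) (W : Ω → ℝ) (X Wj Z : J → Ω → ℝ)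
    (Zjk Wjk Vjk : J → J → Ω → ℝ)
    (hW2 : MemLp W 2 μ) (hX2 : ∀ j, MemLp (X j) 2 μ)
    (hWj2 : ∀ j, MemLp (Wj j) 2 μ) (hZ2 : ∀ j, MemLp (Z j) 2 μ)
    (hZjk2 : ∀ j k, MemLp (Zjk j k) 2 μ)
    (hWjk2 : ∀ j k, MemLp (Wjk j k) 2 μ)
    (hVjk2 : ∀ j k, MemLp (Vjk j k) 2 μ)
    (hW : ∀ ω, W ω = ∑ j, X j ω)
    (hXmean : ∀ j, ∫ ω, X j ω ∂μ = 0)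
    (hWnorm : ∫ ω, (W ω) ^ 2 ∂μ = 1)
    (hdec1 : ∀ j ω, W ω = Wj j ω + Z j ω)
    (hZdef : ∀ j ω, Z j ω = ∑ k ∈ N j, Zjk j k ω)
    (hdec2 : ∀ j, ∀ k ∈ N j, ∀ ω, Wj j ω = Wjk j k ω + Vjk j k ω)
    (hindep1 : ∀ j, IndepFun (Wj j) (X j) μ)
    (hindep2 : ∀ j, ∀ k ∈ N j, IndepFun (Wjk j k) (fun ω => (X j ω, Zjk j k ω)) μ)
    (hHint : ∀ t : ℝ, Integrable (bkrH μ N X Z Zjk Vjk t) μ)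
    (hHeint : ∀ t : ℝ, Integrable
      (fun ω => bkrH μ N X Z Zjk Vjk t ω * Complex.exp (Complex.I * t * W ω)) μ) :
    ∀ t : ℝ,
      ∫ ω, (Complex.I * W ω + t) * Complex.exp (Complex.I * t * W ω) ∂μ =
        (t : ℂ) ^ 2 * ∫ ω, bkrH μ N X Z Zjk Vjk t ω * Complex.exp (Complex.I * t * W ω) ∂μ :=
  bkr_stein_identity_general μ N W X Wj Z Zjk Wjk Vjk hW2 hX2 hWj2 hZjk2 hWjk2 hW hXmean hWnorm
    hdec1 hZdef hdec2 hindep1 hindep2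
end

section
/- Let W be BKR-decomposable and H_t as defined from the decomposition. Then for all t ∈ ℝ: E[|H_t|] ≤ (1/2)∑_{j∈J} E[|X_j|·Z_j²] + ∑_{j∈J}∑_{k∈N_j} ( E[|X_j Z_{jk}(Z_j + V_{jk})|] + E[|X_j Z_{jk}|]·E[|Z_j + V_{jk}|] ). -/
open MeasureTheory ProbabilityTheory

/-!
`(ix)^l R_l(x)` is the tail of the exponential series of `ix` after `l` terms, so the bounds
`|R_1| ≤ 1` and `|R_2| ≤ 1/2` are the estimates `|e^{ix} - 1| ≤ |x|` and `|e^{ix} - 1 - ix| ≤ x²/2`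
(the latter by integrating the former). With these, `|H_t|` is bounded pointwise by the triangle
inequality and `|E[X_j Z_jk]| ≤ E|X_j Z_jk|`, and the bound integrates term by term.
-/

open Complex Finset

lemma Complex.norm_exp_I_mul_ofReal_sub_one_sub_I_mul_le_of_nonneg {x : ℝ} (hx : 0 ≤ x) :
    ‖exp (I * x) - 1 - I * x‖ ≤ x ^ 2 / 2 := by
  have hf : ∀ s : ℝ,
      HasDerivAt (fun s : ℝ => exp (I * s) - 1 - I * s) (I * (exp (I * s) - 1)) s := by
    intro s
    have h : HasDerivAt (fun s : ℝ => I * (s : ℂ)) I s := by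
      simpa using (hasDerivAt_id (s : ℂ)).comp_ofReal.const_mul I
    exact ((h.cexp.sub_const 1).sub h).congr_deriv (by ring)
  have hB : ∀ s : ℝ, HasDerivAt (fun s : ℝ => s ^ 2 / 2) s s := fun s => by
    simpa using (hasDerivAt_pow 2 s).div_const 2
  refine image_norm_le_of_norm_deriv_right_le_deriv_boundary (a := 0) (b := x)
    (fun s _ => (hf s).continuousAt.continuousWithinAt) (fun s _ => (hf s).hasDerivWithinAt)
    (by simp) hB (fun s hs => ?_) ⟨hx, le_rfl⟩
  rw [norm_mul, norm_I, one_mul]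
  exact Real.norm_exp_I_mul_ofReal_sub_one_le.trans_eq (Real.norm_of_nonneg hs.1)

lemma Complex.norm_exp_I_mul_ofReal_sub_one_sub_I_mul_le (x : ℝ) :
    ‖exp (I * x) - 1 - I * x‖ ≤ x ^ 2 / 2 := by
  rcases le_total 0 x with hx | hx
  · exact norm_exp_I_mul_ofReal_sub_one_sub_I_mul_le_of_nonneg hx
  · have hconj : exp (I * x) - 1 - I * x
        = starRingEnd ℂ (exp (I * (-x : ℝ)) - 1 - I * (-x : ℝ)) := by
      simp only [map_sub, map_mul, map_one, ← exp_conj, conj_I, conj_ofReal]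
      push_cast
      rw [neg_mul_neg]
    rw [hconj, norm_conj, ← neg_sq]
    exact norm_exp_I_mul_ofReal_sub_one_sub_I_mul_le_of_nonneg (neg_nonneg.mpr hx)

lemma NormedSpace.pow_mul_tsum_div_factorial_add {𝔸 : Type*} [NormedDivisionRing 𝔸]
    [NormedAlgebra ℚ 𝔸] [CompleteSpace 𝔸] (w : 𝔸) (l : ℕ) :
    w ^ l * ∑' m : ℕ, w ^ m / ((m + l).factorial : 𝔸)
      = exp w - ∑ n ∈ range l, w ^ n / (n.factorial : 𝔸) := by
  rw [← (expSeries_div_hasSum_exp w).tsum_eq, ← tsum_mul_left,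
    ← (expSeries_div_summable w).sum_add_tsum_nat_add l, add_sub_cancel_left]
  simp only [← mul_div_assoc, ← pow_add, add_comm l]

lemma I_mul_ofReal_pow_mul_R (l : ℕ) (x : ℝ) :
    (I * x) ^ l * R l x = exp (I * x) - ∑ n ∈ range l, (I * x) ^ n / (n.factorial : ℂ) := by
  rw [exp_eq_exp_ℂ]
  exact NormedSpace.pow_mul_tsum_div_factorial_add _ l

lemma R_zero_s8 (l : ℕ) : R l 0 = 1 / (l.factorial : ℂ) := by
  rw [R, tsum_eq_single 0 fun m hm => by simp [zero_pow hm]]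
  simp

lemma norm_R_le {l : ℕ} {C : ℝ} (hC : 1 / (l.factorial : ℝ) ≤ C)
    (hexp : ∀ x : ℝ, ‖exp (I * x) - ∑ n ∈ range l, (I * x) ^ n / (n.factorial : ℂ)‖ ≤ C * |x| ^ l)
    (x : ℝ) : ‖R l x‖ ≤ C := by
  rcases eq_or_ne x 0 with rfl | hx
  · simpa [R_zero_s8] using hC
  · have hpos : 0 < |x| ^ l := by positivity
    have h := hexp x
    rw [← I_mul_ofReal_pow_mul_R, norm_mul, norm_pow, norm_mul, norm_I, one_mul, norm_real,
      Real.norm_eq_abs, mul_comm C] at h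
    exact le_of_mul_le_mul_left h hpos

lemma norm_R_one_le (x : ℝ) : ‖R 1 x‖ ≤ 1 :=
  norm_R_le (by simp) (fun x => by simpa using Real.norm_exp_I_mul_ofReal_sub_one_le) x

lemma norm_R_two_le (x : ℝ) : ‖R 2 x‖ ≤ 1 / 2 :=
  norm_R_le (by simp) (fun x => by
    convert norm_exp_I_mul_ofReal_sub_one_sub_I_mul_le x using 1
    · simp [sum_range_succ, sub_sub]
    · rw [sq_abs]; ring) x

lemma norm_ofReal_sub_mul_ofReal_mul_le {a b c : ℝ} {r : ℂ} (hr : ‖r‖ ≤ 1) :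
    ‖((a - b : ℝ) : ℂ) * (c : ℂ) * r‖ ≤ |a * c| + |b| * |c| :=
  calc ‖((a - b : ℝ) : ℂ) * (c : ℂ) * r‖ ≤ |a - b| * |c| * 1 := by
        rw [norm_mul, norm_mul, norm_real, norm_real, Real.norm_eq_abs, Real.norm_eq_abs]
        gcongr
    _ ≤ (|a| + |b|) * |c| := by rw [mul_one]; gcongr; exact abs_sub _ _
    _ = |a * c| + |b| * |c| := by rw [add_mul, abs_mul]

lemma norm_bkrH_le {Ω J : Type*} [MeasurableSpace Ω] [Fintype J] (μ : Measure Ω)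
    (N : J → Finset J) (X Z : J → Ω → ℝ) (Zjk Vjk : J → J → Ω → ℝ) (t : ℝ) (ω : Ω) :
    ‖bkrH μ N X Z Zjk Vjk t ω‖ ≤
      1 / 2 * ∑ j, |X j ω| * Z j ω ^ 2
        + ∑ j, ∑ k ∈ N j, (|X j ω * Zjk j k ω * (Z j ω + Vjk j k ω)|
          + (∫ ω', |X j ω' * Zjk j k ω'| ∂μ) * |Z j ω + Vjk j k ω|) := by
  refine (norm_sub_le _ _).trans (add_le_add ?_ ?_) <;> rw [norm_mul, norm_I, one_mul]
  · rw [mul_sum]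
    refine (norm_sum_le _ _).trans (sum_le_sum fun j _ => ?_)
    rw [norm_mul, norm_real, Real.norm_eq_abs, abs_mul, abs_sq, mul_comm]
    gcongr
    exact norm_R_two_le _
  · refine (norm_sum_le _ _).trans (sum_le_sum fun j _ => ?_)
    refine (norm_sum_le _ _).trans (sum_le_sum fun k _ => ?_)
    refine (norm_ofReal_sub_mul_ofReal_mul_le (norm_R_one_le _)).trans ?_
    gcongr
    exact abs_integral_le_integral_abs

theorem bkr_H_first_moment_bound_general
    {Ω J : Type*} [MeasurableSpace Ω] [Fintype J]
    (μ : Measure Ω) [IsProbabilityMeasure μ]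
    (N : J → Finset J) (X Z : J → Ω → ℝ)
    (Zjk Vjk : J → J → Ω → ℝ)
    (hZ2 : ∀ j, MemLp (Z j) 2 μ)
    (hVjk2 : ∀ j k, MemLp (Vjk j k) 2 μ)
    (hint1 : ∀ j, Integrable (fun ω => |X j ω| * (Z j ω) ^ 2) μ)
    (hint2 : ∀ j k, Integrable (fun ω => |X j ω * Zjk j k ω * (Z j ω + Vjk j k ω)|) μ) :
    ∀ t : ℝ,
      ∫ ω, ‖bkrH μ N X Z Zjk Vjk t ω‖ ∂μ ≤
        (1 / 2) * ∑ j, ∫ ω, |X j ω| * (Z j ω) ^ 2 ∂μ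
          + ∑ j, ∑ k ∈ N j,
              ((∫ ω, |X j ω * Zjk j k ω * (Z j ω + Vjk j k ω)| ∂μ)
                + (∫ ω, |X j ω * Zjk j k ω| ∂μ) * ∫ ω, |Z j ω + Vjk j k ω| ∂μ) := by
  intro t
  have hY : ∀ j k, Integrable (fun ω => |Z j ω + Vjk j k ω|) μ := fun j k =>
    (((hZ2 j).add (hVjk2 j k)).integrable one_le_two).abs
  have hterm : ∀ j k, Integrable (fun ω => |X j ω * Zjk j k ω * (Z j ω + Vjk j k ω)|
      + (∫ ω', |X j ω' * Zjk j k ω'| ∂μ) * |Z j ω + Vjk j k ω|) μ := fun j k =>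
    (hint2 j k).add ((hY j k).const_mul _)
  have hsum1 := integrable_finsetSum univ fun j _ => hint1 j
  have hsum2 := integrable_finsetSum univ fun j _ =>
    integrable_finsetSum (N j) fun k _ => hterm j k
  calc ∫ ω, ‖bkrH μ N X Z Zjk Vjk t ω‖ ∂μ
      ≤ ∫ ω, (1 / 2 * ∑ j, |X j ω| * Z j ω ^ 2
          + ∑ j, ∑ k ∈ N j, (|X j ω * Zjk j k ω * (Z j ω + Vjk j k ω)|
            + (∫ ω', |X j ω' * Zjk j k ω'| ∂μ) * |Z j ω + Vjk j k ω|)) ∂μ :=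
        integral_mono_of_nonneg (ae_of_all _ fun ω => norm_nonneg _)
          ((hsum1.const_mul _).add hsum2) (ae_of_all _ (norm_bkrH_le μ N X Z Zjk Vjk t))
    _ = _ := by
        rw [integral_add (hsum1.const_mul _) hsum2, integral_const_mul,
          integral_finsetSum _ fun j _ => hint1 j]
        simp only [integral_finsetSum _ fun j _ => integrable_finsetSum (N j) fun k _ => hterm j k,
          integral_finsetSum _ fun k _ => hterm _ k,
          integral_add (hint2 _ _) ((hY _ _).const_mul _), integral_const_mul]

/-- First-moment bound on `H_t` for a BKR-decomposable `W`. -/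
theorem bkr_H_first_moment_bound
    {Ω J : Type*} [MeasurableSpace Ω] [Fintype J]
    (μ : Measure Ω) [IsProbabilityMeasure μ]
    (N : J → Finset J) (W : Ω → ℝ) (X Wj Z : J → Ω → ℝ)
    (Zjk Wjk Vjk : J → J → Ω → ℝ)
    (hW2 : MemLp W 2 μ) (hX2 : ∀ j, MemLp (X j) 2 μ)
    (hWj2 : ∀ j, MemLp (Wj j) 2 μ) (hZ2 : ∀ j, MemLp (Z j) 2 μ)
    (hZjk2 : ∀ j k, MemLp (Zjk j k) 2 μ)
    (hWjk2 : ∀ j k, MemLp (Wjk j k) 2 μ)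
    (hVjk2 : ∀ j k, MemLp (Vjk j k) 2 μ)
    (hW : ∀ ω, W ω = ∑ j, X j ω)
    (hXmean : ∀ j, ∫ ω, X j ω ∂μ = 0)
    (hWnorm : ∫ ω, (W ω) ^ 2 ∂μ = 1)
    (hdec1 : ∀ j ω, W ω = Wj j ω + Z j ω)
    (hZdef : ∀ j ω, Z j ω = ∑ k ∈ N j, Zjk j k ω)
    (hdec2 : ∀ j, ∀ k ∈ N j, ∀ ω, Wj j ω = Wjk j k ω + Vjk j k ω)
    (hindep1 : ∀ j, IndepFun (Wj j) (X j) μ)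
    (hindep2 : ∀ j, ∀ k ∈ N j, IndepFun (Wjk j k) (fun ω => (X j ω, Zjk j k ω)) μ)
    (hint1 : ∀ j, Integrable (fun ω => |X j ω| * (Z j ω) ^ 2) μ)
    (hint2 : ∀ j k, Integrable (fun ω => |X j ω * Zjk j k ω * (Z j ω + Vjk j k ω)|) μ) :
    ∀ t : ℝ,
      ∫ ω, ‖bkrH μ N X Z Zjk Vjk t ω‖ ∂μ ≤
        (1 / 2) * ∑ j, ∫ ω, |X j ω| * (Z j ω) ^ 2 ∂μ
          + ∑ j, ∑ k ∈ N j,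
              ((∫ ω, |X j ω * Zjk j k ω * (Z j ω + Vjk j k ω)| ∂μ)
                + (∫ ω, |X j ω * Zjk j k ω| ∂μ) * ∫ ω, |Z j ω + Vjk j k ω| ∂μ) :=
  bkr_H_first_moment_bound_general μ N X Z Zjk Vjk hZ2 hVjk2 hint1 hint2
end

section
/- Let W be BKR-decomposable and H_t as defined. Then |Cov(H_t, e^{−itW})| ≤ Var(∑_{j∈J} X_j Z_j² R_2(−tZ_j))^{1/2} + Var(∑_{j∈J}∑_{k∈N_j} X_j Z_{jk}(Z_j + V_{jk}) R_1(−t(Z_j + V_{jk})))^{1/2} + Var(∑_{j∈J}∑_{k∈N_j} E[X_j Z_{jk}](Z_j + V_{jk}) R_1(−t(Z_j + V_{jk})))^{1/2}, where for a complex random variable the variance means E[|X − E[X]|²]. -/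
open MeasureTheory ProbabilityTheory

/-- Covariance of two complex random variables:
`Cov(X,Y) = E[(X − EX)·conj(Y − EY)]`. -/
noncomputable def covC {Ω : Type*} [MeasurableSpace Ω] (μ : Measure Ω) (X Y : Ω → ℂ) : ℂ :=
  ∫ ω, (X ω - ∫ ω', X ω' ∂μ) * star (Y ω - ∫ ω', Y ω' ∂μ) ∂μ

/-- Variance of a complex random variable: `Var(X) = E[|X − EX|²]`. -/
noncomputable def varC {Ω : Type*} [MeasurableSpace Ω] (μ : Measure Ω) (X : Ω → ℂ) : ℝ :=
  ∫ ω, ‖X ω - ∫ ω', X ω' ∂μ‖ ^ 2 ∂μ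


/-!
Splitting the centred coefficient `X_j Z_jk - E[X_j Z_jk]` writes `H_t = i (S₁ - (S₂ - S₃))`
with `S₁, S₂, S₃` the three sums on the right-hand side. The covariance is linear in its first
argument, so the bound follows from the triangle inequality and Cauchy–Schwarz,
`|Cov(S, e)| ≤ Var(S)^{1/2} Var(e)^{1/2}`, since `Var(e) ≤ E|e|² = 1` for `e = exp(-itW)`.
-/

section

variable {Ω : Type*} [MeasurableSpace Ω] {μ : Measure Ω}

lemma norm_integral_mul_star_le {f g : Ω → ℂ} (hf : MemLp f 2 μ) (hg : MemLp g 2 μ) :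
    ‖∫ ω, f ω * star (g ω) ∂μ‖ ≤ √(∫ ω, ‖f ω‖ ^ 2 ∂μ) * √(∫ ω, ‖g ω‖ ^ 2 ∂μ) := by
  have holder := integral_mul_norm_le_Lp_mul_Lq Real.HolderConjugate.two_two
    (by simpa using hf) (by simpa using hg)
  simp only [Real.rpow_two, ← Real.sqrt_eq_rpow] at holder
  calc ‖∫ ω, f ω * star (g ω) ∂μ‖ ≤ ∫ ω, ‖f ω‖ * ‖g ω‖ ∂μ := by
        simpa using norm_integral_le_integral_norm (fun ω => f ω * star (g ω))
    _ ≤ _ := holder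

lemma norm_covC_le_sqrt_varC_mul_sqrt_varC [IsFiniteMeasure μ] {f g : Ω → ℂ}
    (hf : MemLp f 2 μ) (hg : MemLp g 2 μ) :
    ‖covC μ f g‖ ≤ √(varC μ f) * √(varC μ g) :=
  norm_integral_mul_star_le (hf.sub (memLp_const _)) (hg.sub (memLp_const _))

lemma varC_eq_variance_re_add_variance_im [IsFiniteMeasure μ] {f : Ω → ℂ}
    (hf : MemLp f 2 μ) :
    varC μ f = variance (fun ω => (f ω).re) μ + variance (fun ω => (f ω).im) μ := by
  have hi : Integrable f μ := hf.integrable one_le_two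
  have hre : MemLp (fun ω => (f ω).re) 2 μ := hf.re
  have him : MemLp (fun ω => (f ω).im) 2 μ := hf.im
  have hre' : Integrable (fun ω => ((f ω).re - ∫ x, (f x).re ∂μ) ^ 2) μ :=
    (hre.sub (memLp_const _)).integrable_sq
  have him' : Integrable (fun ω => ((f ω).im - ∫ x, (f x).im ∂μ) ^ 2) μ :=
    (him.sub (memLp_const _)).integrable_sq
  rw [variance_eq_integral hre.1.aemeasurable, variance_eq_integral him.1.aemeasurable, varC,
    ← integral_add hre' him']
  congr 1 with ω
  rw [Complex.sq_norm, Complex.normSq_apply, Complex.sub_re, Complex.sub_im,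
    ← RCLike.re_eq_complex_re, ← RCLike.im_eq_complex_im, integral_re hi, integral_im hi]
  ring

lemma varC_le_integral_norm_sq [IsProbabilityMeasure μ] {f : Ω → ℂ} (hf : MemLp f 2 μ) :
    varC μ f ≤ ∫ ω, ‖f ω‖ ^ 2 ∂μ := by
  have hre : MemLp (fun ω => (f ω).re) 2 μ := hf.re
  have him : MemLp (fun ω => (f ω).im) 2 μ := hf.im
  have hsplit : ∫ ω, ‖f ω‖ ^ 2 ∂μ = μ[(fun ω => (f ω).re) ^ 2] + μ[(fun ω => (f ω).im) ^ 2] := by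
    simp only [Pi.pow_apply]
    rw [← integral_add hre.integrable_sq him.integrable_sq]
    congr 1 with ω
    rw [Complex.sq_norm, Complex.normSq_apply]
    ring
  rw [varC_eq_variance_re_add_variance_im hf, hsplit]
  exact add_le_add (variance_le_expectation_sq hre.1) (variance_le_expectation_sq him.1)

lemma covC_const_mul_left (c : ℂ) (f g : Ω → ℂ) :
    covC μ (fun ω => c * f ω) g = c * covC μ f g := by
  simp only [covC, integral_const_mul, ← mul_sub, mul_assoc]

lemma covC_sub_left [IsFiniteMeasure μ] {f₁ f₂ g : Ω → ℂ}
    (hf₁ : MemLp f₁ 2 μ) (hf₂ : MemLp f₂ 2 μ) (hg : MemLp g 2 μ) :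
    covC μ (fun ω => f₁ ω - f₂ ω) g = covC μ f₁ g - covC μ f₂ g := by
  have hg' := (hg.sub (memLp_const (∫ ω, g ω ∂μ))).star
  have h₁ : Integrable (fun ω => (f₁ ω - ∫ ω, f₁ ω ∂μ) * star (g ω - ∫ ω, g ω ∂μ)) μ :=
    (hf₁.sub (memLp_const _)).integrable_mul hg'
  have h₂ : Integrable (fun ω => (f₂ ω - ∫ ω, f₂ ω ∂μ) * star (g ω - ∫ ω, g ω ∂μ)) μ :=
    (hf₂.sub (memLp_const _)).integrable_mul hg'
  simp only [covC, integral_sub (hf₁.integrable one_le_two) (hf₂.integrable one_le_two)]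
  rw [← integral_sub h₁ h₂]
  congr 1 with ω
  ring

lemma norm_covC_le_sqrt_varC_of_norm_le_one [IsProbabilityMeasure μ] {f g : Ω → ℂ}
    (hf : MemLp f 2 μ) (hg : AEStronglyMeasurable g μ) (hg₁ : ∀ ω, ‖g ω‖ ≤ 1) :
    ‖covC μ f g‖ ≤ √(varC μ f) := by
  have hg₂ : MemLp g 2 μ := MemLp.of_bound hg 1 (ae_of_all _ hg₁)
  have hvar : varC μ g ≤ 1 := calc
    varC μ g ≤ ∫ ω, ‖g ω‖ ^ 2 ∂μ := varC_le_integral_norm_sq hg₂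
    _ ≤ ∫ _, (1 : ℝ) ∂μ :=
      integral_mono (hg₂.integrable_norm_pow' (p := 2)) (integrable_const _) fun ω =>
        pow_le_one₀ (norm_nonneg _) (hg₁ ω)
    _ = 1 := by simp
  calc ‖covC μ f g‖ ≤ √(varC μ f) * √(varC μ g) := norm_covC_le_sqrt_varC_mul_sqrt_varC hf hg₂
    _ ≤ √(varC μ f) * 1 := by gcongr; exact Real.sqrt_le_one.mpr hvar
    _ = √(varC μ f) := mul_one _

lemma bkrH_eq_I_mul {J : Type*} [Fintype J] (μ : Measure Ω) (N : J → Finset J)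
    (X Z : J → Ω → ℝ) (Zjk Vjk : J → J → Ω → ℝ) (t : ℝ) :
    bkrH μ N X Z Zjk Vjk t = fun ω => Complex.I *
      ((∑ j, ((X j ω * (Z j ω) ^ 2 : ℝ) : ℂ) * R 2 (-(t * Z j ω)))
        - ((∑ j, ∑ k ∈ N j, ((X j ω * Zjk j k ω : ℝ) : ℂ) * ((Z j ω + Vjk j k ω : ℝ) : ℂ)
              * R 1 (-(t * (Z j ω + Vjk j k ω))))
          - ∑ j, ∑ k ∈ N j, ((∫ ω', X j ω' * Zjk j k ω' ∂μ : ℝ) : ℂ)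
              * ((Z j ω + Vjk j k ω : ℝ) : ℂ) * R 1 (-(t * (Z j ω + Vjk j k ω))))) := by
  funext ω
  simp only [bkrH, Complex.ofReal_sub, sub_mul, Finset.sum_sub_distrib]
  ring

end

theorem bkr_H_covariance_bound_general
    {Ω J : Type*} [MeasurableSpace Ω] [Fintype J]
    (μ : Measure Ω) [IsProbabilityMeasure μ]
    (N : J → Finset J) (W : Ω → ℝ) (X Z : J → Ω → ℝ)
    (Zjk Vjk : J → J → Ω → ℝ)
    (hW2 : MemLp W 2 μ)
    (hS1 : ∀ t : ℝ, MemLp (fun ω =>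
      ∑ j, ((X j ω * (Z j ω) ^ 2 : ℝ) : ℂ) * R 2 (-(t * Z j ω))) 2 μ)
    (hS2 : ∀ t : ℝ, MemLp (fun ω => ∑ j, ∑ k ∈ N j,
      ((X j ω * Zjk j k ω : ℝ) : ℂ) * ((Z j ω + Vjk j k ω : ℝ) : ℂ)
        * R 1 (-(t * (Z j ω + Vjk j k ω)))) 2 μ)
    (hS3 : ∀ t : ℝ, MemLp (fun ω => ∑ j, ∑ k ∈ N j,
      ((∫ ω', X j ω' * Zjk j k ω' ∂μ : ℝ) : ℂ) * ((Z j ω + Vjk j k ω : ℝ) : ℂ)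
        * R 1 (-(t * (Z j ω + Vjk j k ω)))) 2 μ) :
    ∀ t : ℝ,
      ‖covC μ (bkrH μ N X Z Zjk Vjk t)
          (fun ω => Complex.exp (-(Complex.I * t * W ω)))‖ ≤
        Real.sqrt (varC μ (fun ω =>
            ∑ j, ((X j ω * (Z j ω) ^ 2 : ℝ) : ℂ) * R 2 (-(t * Z j ω))))
          + Real.sqrt (varC μ (fun ω => ∑ j, ∑ k ∈ N j,
              ((X j ω * Zjk j k ω : ℝ) : ℂ) * ((Z j ω + Vjk j k ω : ℝ) : ℂ)
                * R 1 (-(t * (Z j ω + Vjk j k ω)))))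
          + Real.sqrt (varC μ (fun ω => ∑ j, ∑ k ∈ N j,
              ((∫ ω', X j ω' * Zjk j k ω' ∂μ : ℝ) : ℂ) * ((Z j ω + Vjk j k ω : ℝ) : ℂ)
                * R 1 (-(t * (Z j ω + Vjk j k ω))))) := by
  intro t
  set e : Ω → ℂ := fun ω => Complex.exp (-(Complex.I * t * W ω))
  set S₁ : Ω → ℂ := fun ω => ∑ j, ((X j ω * (Z j ω) ^ 2 : ℝ) : ℂ) * R 2 (-(t * Z j ω))
  set S₂ : Ω → ℂ := fun ω => ∑ j, ∑ k ∈ N j,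
    ((X j ω * Zjk j k ω : ℝ) : ℂ) * ((Z j ω + Vjk j k ω : ℝ) : ℂ) * R 1 (-(t * (Z j ω + Vjk j k ω)))
  set S₃ : Ω → ℂ := fun ω => ∑ j, ∑ k ∈ N j, ((∫ ω', X j ω' * Zjk j k ω' ∂μ : ℝ) : ℂ)
    * ((Z j ω + Vjk j k ω : ℝ) : ℂ) * R 1 (-(t * (Z j ω + Vjk j k ω)))
  have he : AEStronglyMeasurable e μ :=
    (by fun_prop : Continuous fun x : ℝ => Complex.exp (-(Complex.I * t * x)))
      |>.comp_aestronglyMeasurable hW2.1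
  have he₁ : ∀ ω, ‖e ω‖ ≤ 1 := fun ω => by simp [e, Complex.norm_exp]
  have he₂ : MemLp e 2 μ := MemLp.of_bound he 1 (ae_of_all _ he₁)
  have hcov {f : Ω → ℂ} (hf : MemLp f 2 μ) : ‖covC μ f e‖ ≤ √(varC μ f) :=
    norm_covC_le_sqrt_varC_of_norm_le_one hf he he₁
  rw [bkrH_eq_I_mul, covC_const_mul_left,
    covC_sub_left (f₂ := fun ω => S₂ ω - S₃ ω) (hS1 t) ((hS2 t).sub (hS3 t)) he₂,
    covC_sub_left (hS2 t) (hS3 t) he₂, norm_mul, Complex.norm_I, one_mul]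
  calc ‖covC μ S₁ e - (covC μ S₂ e - covC μ S₃ e)‖
      ≤ ‖covC μ S₁ e‖ + (‖covC μ S₂ e‖ + ‖covC μ S₃ e‖) :=
        (norm_sub_le _ _).trans (add_le_add_right (norm_sub_le _ _) _)
    _ ≤ √(varC μ S₁) + √(varC μ S₂) + √(varC μ S₃) := by
      rw [← add_assoc]
      gcongr <;> apply hcov
      exacts [hS1 t, hS2 t, hS3 t]

/-- Covariance bound for `H_t` under a BKR-decomposition. -/
theorem bkr_H_covariance_bound
    {Ω J : Type*} [MeasurableSpace Ω] [Fintype J]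
    (μ : Measure Ω) [IsProbabilityMeasure μ]
    (N : J → Finset J) (W : Ω → ℝ) (X Wj Z : J → Ω → ℝ)
    (Zjk Wjk Vjk : J → J → Ω → ℝ)
    (hW2 : MemLp W 2 μ) (hX2 : ∀ j, MemLp (X j) 2 μ)
    (hWj2 : ∀ j, MemLp (Wj j) 2 μ) (hZ2 : ∀ j, MemLp (Z j) 2 μ)
    (hZjk2 : ∀ j k, MemLp (Zjk j k) 2 μ)
    (hWjk2 : ∀ j k, MemLp (Wjk j k) 2 μ)
    (hVjk2 : ∀ j k, MemLp (Vjk j k) 2 μ)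
    (hW : ∀ ω, W ω = ∑ j, X j ω)
    (hXmean : ∀ j, ∫ ω, X j ω ∂μ = 0)
    (hWnorm : ∫ ω, (W ω) ^ 2 ∂μ = 1)
    (hdec1 : ∀ j ω, W ω = Wj j ω + Z j ω)
    (hZdef : ∀ j ω, Z j ω = ∑ k ∈ N j, Zjk j k ω)
    (hdec2 : ∀ j, ∀ k ∈ N j, ∀ ω, Wj j ω = Wjk j k ω + Vjk j k ω)
    (hindep1 : ∀ j, IndepFun (Wj j) (X j) μ)
    (hindep2 : ∀ j, ∀ k ∈ N j, IndepFun (Wjk j k) (fun ω => (X j ω, Zjk j k ω)) μ)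
    (hS1 : ∀ t : ℝ, MemLp (fun ω =>
      ∑ j, ((X j ω * (Z j ω) ^ 2 : ℝ) : ℂ) * R 2 (-(t * Z j ω))) 2 μ)
    (hS2 : ∀ t : ℝ, MemLp (fun ω => ∑ j, ∑ k ∈ N j,
      ((X j ω * Zjk j k ω : ℝ) : ℂ) * ((Z j ω + Vjk j k ω : ℝ) : ℂ)
        * R 1 (-(t * (Z j ω + Vjk j k ω)))) 2 μ)
    (hS3 : ∀ t : ℝ, MemLp (fun ω => ∑ j, ∑ k ∈ N j,
      ((∫ ω', X j ω' * Zjk j k ω' ∂μ : ℝ) : ℂ) * ((Z j ω + Vjk j k ω : ℝ) : ℂ)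
        * R 1 (-(t * (Z j ω + Vjk j k ω)))) 2 μ) :
    ∀ t : ℝ,
      ‖covC μ (bkrH μ N X Z Zjk Vjk t)
          (fun ω => Complex.exp (-(Complex.I * t * W ω)))‖ ≤
        Real.sqrt (varC μ (fun ω =>
            ∑ j, ((X j ω * (Z j ω) ^ 2 : ℝ) : ℂ) * R 2 (-(t * Z j ω))))
          + Real.sqrt (varC μ (fun ω => ∑ j, ∑ k ∈ N j,
              ((X j ω * Zjk j k ω : ℝ) : ℂ) * ((Z j ω + Vjk j k ω : ℝ) : ℂ)
                * R 1 (-(t * (Z j ω + Vjk j k ω)))))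
          + Real.sqrt (varC μ (fun ω => ∑ j, ∑ k ∈ N j,
              ((∫ ω', X j ω' * Zjk j k ω' ∂μ : ℝ) : ℂ) * ((Z j ω + Vjk j k ω : ℝ) : ℂ)
                * R 1 (-(t * (Z j ω + Vjk j k ω))))) :=
  bkr_H_covariance_bound_general μ N W X Z Zjk Vjk hW2 hS1 hS2 hS3
end

section
/- In the subgraph-counting setting, there is a constant C_𝒢 depending only on 𝒢 such that ∑_{j∈J} ∑_{k,l∈N_j} E[Y_j Y_k Y_l] ≤ C_𝒢 · Ψ_𝒢³ · (∑_{H⊆𝒢, e_H>0} Ψ_H^{−1})², where Ψ_H = n^{v_H} p^{e_H}. -/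
/-!
Since the `Y`'s are products of independent `{0,1}`-valued indicators of mean `p`,
`E[Y_j Y_k Y_l] = p^{|j ∪ k ∪ l|}`. Fix an edge set `t ⊇ j` spanning at most `2 v_𝒢` vertices and
let `l` run over the copies meeting `j`. Then `p^{|t ∪ l|} = p^{|t|} p^{e_𝒢 - e_H}`, where `H ⊆ 𝒢`
is the nonempty subgraph that `l` places inside `t`. The copies giving a fixed `H` map the `v_H`
vertices of `H` into the vertices of `t`, so there are at most `(2 v_𝒢)^{v_𝒢} n^{v_𝒢 - v_H}` of
them, whence `∑_l p^{|t ∪ l|} ≤ p^{|t|} (2 v_𝒢)^{v_𝒢} Ψ_𝒢 ∑_H Ψ_H⁻¹`. Applying this with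
`t = j ∪ k` and then `t = j`, and summing over the at most `n^{v_𝒢}` copies `j`, gives the bound
with `C_𝒢 = (2 v_𝒢)^{2 v_𝒢}`.
-/

open MeasureTheory ProbabilityTheory

open scoped Classical in
noncomputable def vsupp {α : Type*} [Fintype α] (h : Finset (Sym2 α)) : ℕ :=
  (Finset.univ.filter fun v : α => ∃ e ∈ h, v ∈ e).card

open Finset

theorem Finset.prod_mul_prod_eq_prod_union_of_isIdempotentElem {ι M : Type*} [CommMonoid M]
    [DecidableEq ι] {g : ι → M} (hg : ∀ i, IsIdempotentElem (g i)) (s t : Finset ι) :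
    (∏ i ∈ s, g i) * ∏ i ∈ t, g i = ∏ i ∈ s ∪ t, g i := by
  have hidem : IsIdempotentElem (∏ i ∈ s ∩ t, g i) :=
    prod_induction _ IsIdempotentElem (fun _ _ ha hb => ha.mul hb) .one fun i _ => hg i
  rw [← prod_union_inter, ← prod_sdiff inter_subset_union, mul_assoc, hidem.eq]

theorem integral_prod_eq_pow_card {Ω ι : Type*} [Fintype ι] [DecidableEq ι] [MeasurableSpace Ω]
    {μ : Measure Ω} {I : ι → Ω → ℝ} {p : ℝ} (hmeas : ∀ i, Measurable (I i))
    (hindep : iIndepFun I μ) (hmean : ∀ i, ∫ ω, I i ω ∂μ = p) (u : Finset ι) :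
    ∫ ω, ∏ i ∈ u, I i ω ∂μ = p ^ #u := by
  have h := hindep.integral_fun_prod_comp (f := fun i x => if i ∈ u then x else 1)
    (fun i => (hmeas i).aemeasurable) fun i => by split_ifs <;> fun_prop
  have := hindep.isProbabilityMeasure
  have hfactor (i : ι) : ∫ ω, (if i ∈ u then I i ω else 1) ∂μ = if i ∈ u then p else 1 := by
    split_ifs <;> simp [hmean]
  simpa [hfactor, prod_ite_mem] using h

theorem integral_prod_mul_prod_mul_prod_eq_pow_card {Ω ι : Type*} [Fintype ι] [DecidableEq ι]
    [MeasurableSpace Ω] {μ : Measure Ω} {I : ι → Ω → ℝ} {p : ℝ} (hmeas : ∀ i, Measurable (I i))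
    (hindep : iIndepFun I μ) (h01 : ∀ i ω, I i ω = 0 ∨ I i ω = 1)
    (hmean : ∀ i, ∫ ω, I i ω ∂μ = p) (j k l : Finset ι) :
    ∫ ω, (∏ i ∈ j, I i ω) * (∏ i ∈ k, I i ω) * ∏ i ∈ l, I i ω ∂μ = p ^ #(j ∪ k ∪ l) := by
  have hidem (ω : Ω) (i : ι) : IsIdempotentElem (I i ω) := by
    rcases h01 i ω with h | h <;> simp [h, IsIdempotentElem]
  simp_rw [prod_mul_prod_eq_prod_union_of_isIdempotentElem (hidem _)]
  exact integral_prod_eq_pow_card hmeas hindep hmean _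

-- `vsupp h` is definitionally `#(vertexSet h)`; the proofs below rely on this.
open scoped Classical in
noncomputable def vertexSet {α : Type*} [Fintype α] (h : Finset (Sym2 α)) : Finset α :=
  univ.filter fun v => ∃ e ∈ h, v ∈ e

section VertexSet

variable {V α : Type*} [Fintype V] [Fintype α]

theorem mem_vertexSet {h : Finset (Sym2 α)} {v : α} : v ∈ vertexSet h ↔ ∃ e ∈ h, v ∈ e := by
  simp [vertexSet]

theorem vsupp_le_card (h : Finset (Sym2 α)) : vsupp h ≤ Fintype.card α :=
  card_le_univ _

theorem vsupp_union_le [DecidableEq α] (s t : Finset (Sym2 α)) :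
    vsupp (s ∪ t) ≤ vsupp s + vsupp t := by
  refine (card_le_card fun v hv => ?_).trans (card_union_le (vertexSet s) (vertexSet t))
  obtain ⟨e, he, hve⟩ := mem_vertexSet.1 hv
  rcases mem_union.1 he with he | he
  · exact mem_union_left _ (mem_vertexSet.2 ⟨e, he, hve⟩)
  · exact mem_union_right _ (mem_vertexSet.2 ⟨e, he, hve⟩)

theorem vsupp_image_map_le [DecidableEq α] (E : Finset (Sym2 V)) (f : V → α) :
    vsupp (E.image (Sym2.map f)) ≤ Fintype.card V := by
  refine (card_le_card fun v hv => ?_).trans (card_image_le (s := univ) (f := f))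
  obtain ⟨e, he, hve⟩ := mem_vertexSet.1 hv
  obtain ⟨a, -, rfl⟩ := mem_image.1 he
  obtain ⟨i, -, rfl⟩ := Sym2.mem_map.1 hve
  exact mem_image_of_mem f (mem_univ i)

theorem mapsTo_vertexSet_filter [DecidableEq α] (E : Finset (Sym2 V)) (f : V → α)
    (t : Finset (Sym2 α)) :
    Set.MapsTo f (vertexSet (E.filter (Sym2.map f · ∈ t))) (vertexSet t) := by
  intro i hi
  obtain ⟨a, ha, hia⟩ := mem_vertexSet.1 hi
  exact mem_vertexSet.2 ⟨_, (mem_filter.1 ha).2, Sym2.mem_map.2 ⟨i, hia, rfl⟩⟩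

end VertexSet

theorem card_embeddings_mapping_into_le {V α : Type*} [Fintype V] [Fintype α] [DecidableEq V]
    [DecidableEq α] (S : Finset V) (W : Finset α) :
    #(univ.filter fun f : V ↪ α => ∀ i ∈ S, f i ∈ W)
      ≤ #W ^ #S * Fintype.card α ^ (Fintype.card V - #S) := by
  calc #(univ.filter fun f : V ↪ α => ∀ i ∈ S, f i ∈ W)
      ≤ #(Fintype.piFinset fun i => if i ∈ S then W else univ) := by
        refine card_le_card_of_injOn (fun f => ⇑f) (fun f hf => ?_)
          fun f _ g _ h => DFunLike.coe_injective h
        rw [mem_coe, Fintype.mem_piFinset]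
        intro i
        split_ifs with hi
        · exact (mem_filter.1 hf).2 i hi
        · exact mem_univ _
    _ = #W ^ #S * Fintype.card α ^ (Fintype.card V - #S) := by
        rw [Fintype.card_piFinset]
        simp only [apply_ite card, card_univ]
        rw [prod_ite, prod_const, prod_const, filter_mem_eq_inter, univ_inter, filter_not,
          filter_mem_eq_inter, univ_inter, card_sdiff, inter_univ, card_univ]

theorem card_image_map_sdiff {V α : Type*} [DecidableEq V] [DecidableEq α]
    (E : Finset (Sym2 V)) (f : V ↪ α) (t : Finset (Sym2 α)) :
    #(E.image (Sym2.map f) \ t) = #E - #(E.filter (Sym2.map f · ∈ t)) := by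
  rw [sdiff_eq_filter, filter_image,
    card_image_of_injective _ (Sym2.map.injective f.injective), filter_not, card_sdiff,
    inter_eq_left.2 (filter_subset _ _)]

theorem pow_le_two_mul_pow_self {w k v : ℕ} (hw : w ≤ 2 * v) (hk : k ≤ v) :
    w ^ k ≤ (2 * v) ^ v := by
  rcases v.eq_zero_or_pos with rfl | hv
  · simp_all
  · exact (Nat.pow_le_pow_left hw k).trans (Nat.pow_le_pow_right (by omega) hk)

theorem cast_pow_mul_pow_sub_mul_pow_sub_le {w n v k e d : ℕ} {p : ℝ} (hn : 0 < n) (hp : 0 < p)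
    (hw : w ≤ 2 * v) (hk : k ≤ v) (hd : d ≤ e) :
    ((w ^ k * n ^ (v - k) : ℕ) : ℝ) * p ^ (e - d)
      ≤ (2 * v : ℝ) ^ v * ((n : ℝ) ^ v * p ^ e) * ((n : ℝ) ^ k * p ^ d)⁻¹ := by
  have hratio :
      (n : ℝ) ^ (v - k) * p ^ (e - d) = (n : ℝ) ^ v * p ^ e * ((n : ℝ) ^ k * p ^ d)⁻¹ := by
    rw [pow_sub₀ _ (by positivity) hk, pow_sub₀ _ hp.ne' hd, mul_inv]
    ring
  have hK : ((w ^ k : ℕ) : ℝ) ≤ (2 * v : ℝ) ^ v := by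
    exact_mod_cast pow_le_two_mul_pow_self hw hk
  rw [Nat.cast_mul, Nat.cast_pow n, mul_assoc, hratio, ← mul_assoc]
  gcongr

section Copies

variable {V α : Type*} [Fintype V] [Fintype α] [DecidableEq α]

variable (α) in
noncomputable def copies (E : Finset (Sym2 V)) : Finset (Finset (Sym2 α)) :=
  univ.image fun f : V ↪ α => E.image (Sym2.map f)

theorem card_embeddings_filter_eq_le [DecidableEq V] (E : Finset (Sym2 V)) (t : Finset (Sym2 α))
    (H : Finset (Sym2 V)) :
    #(univ.filter fun f : V ↪ α => E.filter (Sym2.map f · ∈ t) = H)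
      ≤ vsupp t ^ vsupp H * Fintype.card α ^ (Fintype.card V - vsupp H) := by
  refine le_trans (card_le_card fun f hf => ?_) (card_embeddings_mapping_into_le _ _)
  rw [mem_filter] at hf ⊢
  exact ⟨mem_univ f, fun i hi => mapsTo_vertexSet_filter E f t (hf.2 ▸ hi)⟩

theorem sum_embeddings_meeting_le [DecidableEq V] (E : Finset (Sym2 V)) {p : ℝ} (hp : 0 ≤ p)
    {j t : Finset (Sym2 α)} (hjt : j ⊆ t) :
    ∑ f ∈ univ.filter fun f : V ↪ α => (j ∩ E.image (Sym2.map f)).Nonempty,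
        p ^ #(E.image (Sym2.map f) \ t)
      ≤ ∑ H ∈ E.powerset.filter Finset.Nonempty,
          ((vsupp t ^ vsupp H * Fintype.card α ^ (Fintype.card V - vsupp H) : ℕ) : ℝ)
            * p ^ (#E - #H) := by
  have hmaps : ∀ f ∈ univ.filter fun f : V ↪ α => (j ∩ E.image (Sym2.map f)).Nonempty,
      E.filter (Sym2.map f · ∈ t) ∈ E.powerset.filter Finset.Nonempty := by
    intro f hf
    obtain ⟨x, hxj, hx⟩ := (mem_filter.1 hf).2.exists_mem.imp fun x => mem_inter.1
    obtain ⟨a, ha, rfl⟩ := mem_image.1 hx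
    exact mem_filter.2 ⟨mem_powerset.2 (filter_subset _ _), a, mem_filter.2 ⟨ha, hjt hxj⟩⟩
  simp_rw [card_image_map_sdiff]
  rw [← sum_fiberwise_of_maps_to hmaps]
  refine sum_le_sum fun H _ => ?_
  rw [sum_congr rfl fun f hf => by rw [(mem_filter.1 hf).2], sum_const, nsmul_eq_mul]
  gcongr
  exact (card_le_card (filter_subset_filter _ (filter_subset _ _))).trans
    (card_embeddings_filter_eq_le E t H)

theorem sum_neighbours_pow_card_sdiff_le [DecidableEq V] {E : Finset (Sym2 V)} {p : ℝ}
    (hp : 0 < p) (hα : 0 < Fintype.card α) {j t : Finset (Sym2 α)} (hjt : j ⊆ t)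
    (ht : vsupp t ≤ 2 * Fintype.card V) :
    ∑ l ∈ (copies α E).filter fun l => (j ∩ l).Nonempty, p ^ #(l \ t)
      ≤ (2 * Fintype.card V : ℝ) ^ Fintype.card V
          * ((Fintype.card α : ℝ) ^ Fintype.card V * p ^ #E)
          * ∑ H ∈ E.powerset.filter Finset.Nonempty,
              ((Fintype.card α : ℝ) ^ vsupp H * p ^ #H)⁻¹ := by
  calc ∑ l ∈ (copies α E).filter fun l => (j ∩ l).Nonempty, p ^ #(l \ t)
      ≤ ∑ f ∈ univ.filter fun f : V ↪ α => (j ∩ E.image (Sym2.map f)).Nonempty,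
          p ^ #(E.image (Sym2.map f) \ t) := by
        rw [copies, filter_image]
        exact sum_image_le_of_nonneg fun _ _ => by positivity
    _ ≤ _ := sum_embeddings_meeting_le E hp.le hjt
    _ ≤ _ := sum_le_sum fun H hH => cast_pow_mul_pow_sub_mul_pow_sub_le hα hp ht
          (vsupp_le_card H) (card_le_card (mem_powerset.1 (mem_filter.1 hH).1))
    _ = _ := (mul_sum _ _ _).symm

theorem card_of_mem_copies {E : Finset (Sym2 V)} {j : Finset (Sym2 α)} (hj : j ∈ copies α E) :
    #j = #E := by
  obtain ⟨f, -, rfl⟩ := mem_image.1 hj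
  exact card_image_of_injective _ (Sym2.map.injective f.injective)

theorem vsupp_le_of_mem_copies {E : Finset (Sym2 V)} {j : Finset (Sym2 α)}
    (hj : j ∈ copies α E) : vsupp j ≤ Fintype.card V := by
  obtain ⟨f, -, rfl⟩ := mem_image.1 hj
  exact vsupp_image_map_le E f

theorem card_copies_le (E : Finset (Sym2 V)) :
    #(copies α E) ≤ Fintype.card α ^ Fintype.card V := by
  calc #(copies α E) ≤ Fintype.card (V ↪ α) := card_image_le
    _ ≤ Fintype.card α ^ Fintype.card V := by
        rw [Fintype.card_embedding_eq]
        exact Nat.descFactorial_le_pow _ _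

theorem pow_card_union_eq_zero {p : ℝ} (hp : 0 ≤ p) (hpα : ¬(0 < p ∧ 0 < Fintype.card α))
    {j k : Finset (Sym2 α)} (hjk : (j ∩ k).Nonempty) (l : Finset (Sym2 α)) :
    p ^ #(j ∪ k ∪ l) = 0 := by
  obtain ⟨x, hx⟩ := hjk
  have hα : 0 < Fintype.card α := by
    induction x using Sym2.ind with
    | _ a _ => exact Fintype.card_pos_iff.2 ⟨a⟩
  obtain rfl : p = 0 := by
    by_contra hp0
    exact hpα ⟨lt_of_le_of_ne hp (Ne.symm hp0), hα⟩
  exact zero_pow (card_pos.2 ⟨x, mem_union_left _ (mem_union_left _ (mem_inter.1 hx).1)⟩).ne'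

theorem sum_triple_pow_card_union_le [DecidableEq V] (E : Finset (Sym2 V)) {p : ℝ}
    (hp : 0 ≤ p) :
    ∑ j ∈ copies α E, ∑ k ∈ (copies α E).filter (fun k => (j ∩ k).Nonempty),
        ∑ l ∈ (copies α E).filter (fun l => (j ∩ l).Nonempty), p ^ #(j ∪ k ∪ l)
      ≤ ((2 * Fintype.card V : ℝ) ^ Fintype.card V) ^ 2
          * ((Fintype.card α : ℝ) ^ Fintype.card V * p ^ #E) ^ 3
          * (∑ H ∈ E.powerset.filter Finset.Nonempty,
              ((Fintype.card α : ℝ) ^ vsupp H * p ^ #H)⁻¹) ^ 2 := by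
  by_cases hpα : 0 < p ∧ 0 < Fintype.card α
  swap
  · rw [sum_eq_zero fun j _ => sum_eq_zero fun k hk => sum_eq_zero fun l _ =>
      pow_card_union_eq_zero hp hpα (mem_filter.1 hk).2 l]
    positivity
  set B := (2 * Fintype.card V : ℝ) ^ Fintype.card V
          * ((Fintype.card α : ℝ) ^ Fintype.card V * p ^ #E)
          * ∑ H ∈ E.powerset.filter Finset.Nonempty,
              ((Fintype.card α : ℝ) ^ vsupp H * p ^ #H)⁻¹
  have hstep : ∀ {j t : Finset (Sym2 α)}, j ⊆ t → vsupp t ≤ 2 * Fintype.card V →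
      ∑ l ∈ (copies α E).filter fun l => (j ∩ l).Nonempty, p ^ #(t ∪ l) ≤ p ^ #t * B := by
    intro j t hjt ht
    simp_rw [union_comm t, ← card_sdiff_add_card, pow_add, ← sum_mul, mul_comm _ (p ^ #t)]
    gcongr
    exact sum_neighbours_pow_card_sdiff_le hpα.1 hpα.2 hjt ht
  calc ∑ j ∈ copies α E, ∑ k ∈ (copies α E).filter (fun k => (j ∩ k).Nonempty),
        ∑ l ∈ (copies α E).filter (fun l => (j ∩ l).Nonempty), p ^ #(j ∪ k ∪ l)
      ≤ ∑ j ∈ copies α E, ∑ k ∈ (copies α E).filter (fun k => (j ∩ k).Nonempty),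
          p ^ #(j ∪ k) * B := by
        refine sum_le_sum fun j hj => sum_le_sum fun k hk => hstep subset_union_left ?_
        have := vsupp_le_of_mem_copies hj
        have := vsupp_le_of_mem_copies (mem_filter.1 hk).1
        have := vsupp_union_le j k
        omega
    _ ≤ ∑ j ∈ copies α E, p ^ #j * B * B := by
        refine sum_le_sum fun j hj => ?_
        rw [← sum_mul]
        gcongr
        exact hstep subset_rfl (by have := vsupp_le_of_mem_copies hj; omega)
    _ = #(copies α E) * (p ^ #E * B * B) := by
        rw [← nsmul_eq_mul, ← sum_const]
        exact sum_congr rfl fun j hj => by rw [card_of_mem_copies hj]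
    _ ≤ (Fintype.card α : ℝ) ^ Fintype.card V * (p ^ #E * B * B) := by
        gcongr
        exact_mod_cast card_copies_le E
    _ = _ := by ring

end Copies

theorem triple_copy_expectation_bound_general
    {nV : ℕ} (G : SimpleGraph (Fin nV)) [Fintype G.edgeSet] :
    ∃ C : ℝ, 0 < C ∧
      ∀ (n : ℕ) (p : ℝ), 0 ≤ p → p ≤ 1 →
      ∀ (Ω : Type) (_ : MeasurableSpace Ω) (μ : Measure Ω) (_ : IsProbabilityMeasure μ)
        (I : Sym2 (Fin n) → Ω → ℝ),
        (∀ m, Measurable (I m)) →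
        iIndepFun I μ →
        (∀ m ω, I m ω = 0 ∨ I m ω = 1) →
        (∀ m, ∫ ω, I m ω ∂μ = p) →
        ∀ J : Finset (Finset (Sym2 (Fin n))),
        (∀ j, j ∈ J ↔ ∃ f : Fin nV ↪ Fin n, j = G.edgeFinset.image (Sym2.map ⇑f)) →
        ∑ j ∈ J, ∑ k ∈ J.filter (fun k => (j ∩ k).Nonempty),
            ∑ l ∈ J.filter (fun l => (j ∩ l).Nonempty),
              ∫ ω, (∏ a ∈ j, I a ω) * (∏ a ∈ k, I a ω) * ∏ a ∈ l, I a ω ∂μ ≤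
          C * ((n : ℝ) ^ nV * p ^ G.edgeFinset.card) ^ 3 *
            (∑ h ∈ G.edgeFinset.powerset.filter Finset.Nonempty,
              ((n : ℝ) ^ vsupp h * p ^ h.card)⁻¹) ^ 2 := by
  have hK : (0 : ℝ) < (2 * nV) ^ nV := by
    rcases nV.eq_zero_or_pos with rfl | hnV
    · simp
    · positivity
  refine ⟨((2 * nV : ℝ) ^ nV) ^ 2, by positivity, ?_⟩
  intro n p hp _ Ω _ μ _ I hmeas hindep h01 hmean J hJ
  obtain rfl : J = copies (Fin n) G.edgeFinset := by
    ext j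
    simp [copies, hJ, eq_comm]
  simp_rw [integral_prod_mul_prod_mul_prod_eq_pow_card hmeas hindep h01 hmean]
  simpa using sum_triple_pow_card_union_le (α := Fin n) G.edgeFinset hp

/-- Subgraph counting: there is a constant `C_𝒢` such that
`∑_{j∈J}∑_{k,l∈N_j} E[Y_jY_kY_l] ≤ C_𝒢·Ψ_𝒢³·(∑_{H⊆𝒢, e_H>0} Ψ_H⁻¹)²`,
where `Ψ_H = n^{v_H} p^{e_H}`. -/
theorem triple_copy_expectation_bound
    {nV : ℕ} (G : SimpleGraph (Fin nV)) [DecidableRel G.Adj] [Fintype G.edgeSet]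
    (hnoiso : ∀ v : Fin nV, ∃ w, G.Adj v w)
    (hedge : 0 < G.edgeFinset.card) :
    ∃ C : ℝ, 0 < C ∧
      ∀ (n : ℕ) (p : ℝ), 0 ≤ p → p ≤ 1 →
      ∀ (Ω : Type) (_ : MeasurableSpace Ω) (μ : Measure Ω) (_ : IsProbabilityMeasure μ)
        (I : Sym2 (Fin n) → Ω → ℝ),
        (∀ m, Measurable (I m)) →
        iIndepFun I μ →
        (∀ m ω, I m ω = 0 ∨ I m ω = 1) →
        (∀ m, ∫ ω, I m ω ∂μ = p) →
        ∀ J : Finset (Finset (Sym2 (Fin n))),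
        (∀ j, j ∈ J ↔ ∃ f : Fin nV ↪ Fin n, j = G.edgeFinset.image (Sym2.map ⇑f)) →
        ∑ j ∈ J, ∑ k ∈ J.filter (fun k => (j ∩ k).Nonempty),
            ∑ l ∈ J.filter (fun l => (j ∩ l).Nonempty),
              ∫ ω, (∏ a ∈ j, I a ω) * (∏ a ∈ k, I a ω) * ∏ a ∈ l, I a ω ∂μ ≤
          C * ((n : ℝ) ^ nV * p ^ G.edgeFinset.card) ^ 3 *
            (∑ h ∈ G.edgeFinset.powerset.filter Finset.Nonempty,
              ((n : ℝ) ^ vsupp h * p ^ h.card)⁻¹) ^ 2 :=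
  triple_copy_expectation_bound_general G
end
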